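/- arXiv:1211.2067 — 6 statements merged into one kernel-verified Lean document; each statement's English description precedes it below -/
import Mathlib

section
/- Suppose the smooth fields u_S, v_S, u_T, v_T, γ_S, π, θ_S satisfy (G1) ∂_t v_S + (u_S·∇)v_S + (∇u_S)ᵀ v_S = ∇π − v_T ∇u_T − γ_S ∇θ_S, (G2) ∂_t v_T + u_S·∇v_T = −s γ_S, and (G3) ∂_t θ_S + u_S·∇θ_S = −s u_T, where s ∈ ℝ is a constant. Then the ℝ²-valued field w := s v_S − v_T ∇θ_S satisfies ∂_t w + (u_S·∇)w + (∇u_S)ᵀ w = s ∇π. -/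
noncomputable section

/-- Partial derivative in the first (x) coordinate of a planar scalar field. -/
def px (f : ℝ × ℝ → ℝ) (p : ℝ × ℝ) : ℝ := deriv (fun x => f (x, p.2)) p.1

/-- Partial derivative in the second (z) coordinate of a planar scalar field. -/
def pz (f : ℝ × ℝ → ℝ) (p : ℝ × ℝ) : ℝ := deriv (fun z => f (p.1, z)) p.2

/-- Time derivative of a time-dependent scalar field. -/
def pt (f : ℝ → ℝ × ℝ → ℝ) (t : ℝ) (p : ℝ × ℝ) : ℝ := deriv (fun s => f s p) t

/-- Smoothness (C^∞, jointly in time and space) of a time-dependent scalar field. -/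
def SmoothS (f : ℝ → ℝ × ℝ → ℝ) : Prop :=
  ContDiff ℝ (⊤ : ℕ∞) (fun q : ℝ × (ℝ × ℝ) => f q.1 q.2)

/-- Smoothness of a time-dependent planar vector field. -/
def SmoothV (u : ℝ → ℝ × ℝ → ℝ × ℝ) : Prop :=
  ContDiff ℝ (⊤ : ℕ∞) (fun q : ℝ × (ℝ × ℝ) => u q.1 q.2)

/-- First component of a time-dependent planar vector field. -/
def c1 (v : ℝ → ℝ × ℝ → ℝ × ℝ) : ℝ → ℝ × ℝ → ℝ := fun t p => (v t p).1

/-- Second component of a time-dependent planar vector field. -/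
def c2 (v : ℝ → ℝ × ℝ → ℝ × ℝ) : ℝ → ℝ × ℝ → ℝ := fun t p => (v t p).2

/-- Advective derivative u·∇f of a time-dependent scalar field f along u. -/
def adv (u : ℝ → ℝ × ℝ → ℝ × ℝ) (f : ℝ → ℝ × ℝ → ℝ) (t : ℝ) (p : ℝ × ℝ) : ℝ :=
  (u t p).1 * px (f t) p + (u t p).2 * pz (f t) p

/-- First component of (∇u)ᵀ v, i.e. Σⱼ vʲ ∂ₓ uʲ. -/
def gradT1 (u v : ℝ → ℝ × ℝ → ℝ × ℝ) (t : ℝ) (p : ℝ × ℝ) : ℝ :=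
  (v t p).1 * px (c1 u t) p + (v t p).2 * px (c2 u t) p

/-- Second component of (∇u)ᵀ v, i.e. Σⱼ vʲ ∂_z uʲ. -/
def gradT2 (u v : ℝ → ℝ × ℝ → ℝ × ℝ) (t : ℝ) (p : ℝ × ℝ) : ℝ :=
  (v t p).1 * pz (c1 u t) p + (v t p).2 * pz (c2 u t) p

/-- Planar dot product. -/
def dot (a b : ℝ × ℝ) : ℝ := a.1 * b.1 + a.2 * b.2

namespace KelvinAux

/-- joint function -/
def J (f : ℝ → ℝ × ℝ → ℝ) : ℝ × (ℝ × ℝ) → ℝ := fun q => f q.1 q.2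

/-- directional derivative of the joint function -/
def D (v : ℝ × (ℝ × ℝ)) (f : ℝ → ℝ × ℝ → ℝ) : ℝ → ℝ × ℝ → ℝ :=
  fun t p => fderiv ℝ (J f) (t, p) v

def et : ℝ × (ℝ × ℝ) := (1, (0, 0))
def ex : ℝ × (ℝ × ℝ) := (0, (1, 0))
def ez : ℝ × (ℝ × ℝ) := (0, (0, 1))

lemma jdiff {f} (hf : SmoothS f) (q : ℝ × (ℝ × ℝ)) : DifferentiableAt ℝ (J f) q :=
  (ContDiff.differentiable hf (by simp)) q

lemma smooth_D {f} (hf : SmoothS f) (v : ℝ × (ℝ × ℝ)) : SmoothS (D v f) := by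
  have h : ContDiff ℝ (⊤ : ℕ∞) (fun q => fderiv ℝ (J f) q v) :=
    (ContDiff.fderiv_right hf (by simp)).clm_apply contDiff_const
  exact h

lemma pt_eq {f} (hf : SmoothS f) (t : ℝ) (p : ℝ × ℝ) : pt f t p = D et f t p := by
  have hline : HasDerivAt (fun s : ℝ => ((s, p) : ℝ × (ℝ × ℝ))) et t :=
    HasDerivAt.prodMk (hasDerivAt_id _) (hasDerivAt_const _ _)
  exact ((jdiff hf (t, p)).hasFDerivAt.comp_hasDerivAt t hline).deriv

lemma px_eq {f} (hf : SmoothS f) (t : ℝ) (p : ℝ × ℝ) : px (f t) p = D ex f t p := by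
  have hline : HasDerivAt (fun x : ℝ => ((t, (x, p.2)) : ℝ × (ℝ × ℝ))) ex p.1 :=
    HasDerivAt.prodMk (hasDerivAt_const _ _) (HasDerivAt.prodMk (hasDerivAt_id _) (hasDerivAt_const _ _))
  exact ((jdiff hf (t, p)).hasFDerivAt.comp_hasDerivAt p.1 hline).deriv

lemma pz_eq {f} (hf : SmoothS f) (t : ℝ) (p : ℝ × ℝ) : pz (f t) p = D ez f t p := by
  have hline : HasDerivAt (fun z : ℝ => ((t, (p.1, z)) : ℝ × (ℝ × ℝ))) ez p.2 :=
    HasDerivAt.prodMk (hasDerivAt_const _ _) (HasDerivAt.prodMk (hasDerivAt_const _ _) (hasDerivAt_id _))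
  exact ((jdiff hf (t, p)).hasFDerivAt.comp_hasDerivAt p.2 hline).deriv

lemma D_comm {f} (hf : SmoothS f) (v w : ℝ × (ℝ × ℝ)) (t : ℝ) (p : ℝ × ℝ) :
    D v (D w f) t p = D w (D v f) t p := by
  have hd : ∀ q, HasFDerivAt (J f) (fderiv ℝ (J f) q) q := fun q => (jdiff hf q).hasFDerivAt
  have h2 : HasFDerivAt (fderiv ℝ (J f)) (fderiv ℝ (fderiv ℝ (J f)) (t, p)) (t, p) :=
    (((ContDiff.fderiv_right (m := 1) hf (by exact WithTop.coe_le_coe.mpr le_top)).differentiable one_ne_zero) (t, p)).hasFDerivAt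
  have hsymm := second_derivative_symmetric hd h2
  have key : ∀ a : ℝ × (ℝ × ℝ), ∀ b : ℝ × (ℝ × ℝ),
      D a (D b f) t p = fderiv ℝ (fderiv ℝ (J f)) (t, p) a b := by
    intro a b
    have hb : HasFDerivAt (fun q => fderiv ℝ (J f) q b)
        ((ContinuousLinearMap.apply ℝ ℝ b).comp (fderiv ℝ (fderiv ℝ (J f)) (t, p))) (t, p) :=
      (ContinuousLinearMap.apply ℝ ℝ b).hasFDerivAt.comp (t, p) h2
    have : D a (D b f) t p = fderiv ℝ (fun q => fderiv ℝ (J f) q b) (t, p) a := rfl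
    rw [this, hb.fderiv]
    rfl
  rw [key v w, key w v, hsymm v w]

@[simp] lemma D_def {f} (v : ℝ × (ℝ × ℝ)) (t : ℝ) (p : ℝ × ℝ) :
    D v f t p = fderiv ℝ (J f) (t, p) v := rfl

lemma smooth_shapeA {f g h} (hf : SmoothS f) (hg : SmoothS g) (hh : SmoothS h) (a : ℝ) :
    SmoothS (fun t p => a * f t p - g t p * h t p) := by
  have : ContDiff ℝ (⊤ : ℕ∞) (fun q : ℝ × (ℝ × ℝ) => a * J f q - J g q * J h q) :=
    (contDiff_const.mul hf).sub (ContDiff.mul hg hh)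
  exact this

lemma D_shapeA {f g h} (hf : SmoothS f) (hg : SmoothS g) (hh : SmoothS h) (a : ℝ)
    (v : ℝ × (ℝ × ℝ)) (t : ℝ) (p : ℝ × ℝ) :
    D v (fun t p => a * f t p - g t p * h t p) t p
      = a * D v f t p - (D v g t p * h t p + g t p * D v h t p) := by
  have Hf := (jdiff hf (t, p)).hasFDerivAt
  have Hg := (jdiff hg (t, p)).hasFDerivAt
  have Hh := (jdiff hh (t, p)).hasFDerivAt
  have H := (Hf.const_mul a).sub (Hg.mul Hh)
  have hfd : D v (fun t p => a * f t p - g t p * h t p) t p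
      = fderiv ℝ (fun q => a * J f q - J g q * J h q) (t, p) v := rfl
  rw [hfd, HasFDerivAt.fderiv (f := fun q => a * J f q - J g q * J h q) H]
  simp [smul_eq_mul, J]
  ring

lemma D_shapeB {f g h i j} (hf : SmoothS f) (hg : SmoothS g) (hh : SmoothS h)
    (hi : SmoothS i) (hj : SmoothS j) (v : ℝ × (ℝ × ℝ)) (t : ℝ) (p : ℝ × ℝ) :
    D v (fun t p => f t p + (g t p * h t p + i t p * j t p)) t p
      = D v f t p + (D v g t p * h t p + g t p * D v h t p
          + (D v i t p * j t p + i t p * D v j t p)) := by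
  have Hf := (jdiff hf (t, p)).hasFDerivAt
  have Hg := (jdiff hg (t, p)).hasFDerivAt
  have Hh := (jdiff hh (t, p)).hasFDerivAt
  have Hi := (jdiff hi (t, p)).hasFDerivAt
  have Hj := (jdiff hj (t, p)).hasFDerivAt
  have H := Hf.add ((Hg.mul Hh).add (Hi.mul Hj))
  have hfd : D v (fun t p => f t p + (g t p * h t p + i t p * j t p)) t p
      = fderiv ℝ (fun q => J f q + (J g q * J h q + J i q * J j q)) (t, p) v := rfl
  rw [hfd, HasFDerivAt.fderiv (f := fun q => J f q + (J g q * J h q + J i q * J j q)) H]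
  simp [smul_eq_mul, J]
  ring

lemma D_shapeC {f} (hf : SmoothS f) (a : ℝ) (v : ℝ × (ℝ × ℝ)) (t : ℝ) (p : ℝ × ℝ) :
    D v (fun t p => -(a * f t p)) t p = -(a * D v f t p) := by
  have Hf := (jdiff hf (t, p)).hasFDerivAt
  have H := (Hf.const_mul a).neg
  have hfd : D v (fun t p => -(a * f t p)) t p
      = fderiv ℝ (fun q => -(a * J f q)) (t, p) v := rfl
  rw [hfd, HasFDerivAt.fderiv (f := fun q => -(a * J f q)) H]
  simp [smul_eq_mul, J]

/-- main computation, parametric in the spatial direction `e` -/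
lemma key (s : ℝ) (e : ℝ × (ℝ × ℝ))
    (u1 u2 vc va vb vT uT γ π θ : ℝ → ℝ × ℝ → ℝ)
    (hu1 : SmoothS u1) (hu2 : SmoothS u2) (hvc : SmoothS vc)
    (hvT : SmoothS vT) (huT : SmoothS uT) (hθ : SmoothS θ)
    (hG1 : ∀ t p, D et vc t p + (u1 t p * D ex vc t p + u2 t p * D ez vc t p)
        + (va t p * D e u1 t p + vb t p * D e u2 t p)
        = D e π t p - vT t p * D e uT t p - γ t p * D e θ t p)
    (hG2 : ∀ t p, D et vT t p + (u1 t p * D ex vT t p + u2 t p * D ez vT t p) = -(s * γ t p))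
    (hG3 : ∀ t p, D et θ t p + (u1 t p * D ex θ t p + u2 t p * D ez θ t p) = -(s * uT t p))
    (t : ℝ) (p : ℝ × ℝ) :
    D et (fun t p => s * vc t p - vT t p * D e θ t p) t p
      + (u1 t p * D ex (fun t p => s * vc t p - vT t p * D e θ t p) t p
         + u2 t p * D ez (fun t p => s * vc t p - vT t p * D e θ t p) t p)
      + ((s * va t p - vT t p * D ex θ t p) * D e u1 t p
         + (s * vb t p - vT t p * D ez θ t p) * D e u2 t p)
      = s * D e π t p := by
  have hDθ : SmoothS (D e θ) := smooth_D hθ e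
  have E1 := D_shapeA hvc hvT hDθ s et t p
  have E2 := D_shapeA hvc hvT hDθ s ex t p
  have E3 := D_shapeA hvc hvT hDθ s ez t p
  have hfun : (fun t p => D et θ t p + (u1 t p * D ex θ t p + u2 t p * D ez θ t p))
      = fun t p => -(s * uT t p) := by
    funext a b; exact hG3 a b
  have E4 : D e (fun t p => D et θ t p + (u1 t p * D ex θ t p + u2 t p * D ez θ t p)) t p
      = D e (fun t p => -(s * uT t p)) t p := by rw [hfun]
  rw [D_shapeB (smooth_D hθ et) hu1 (smooth_D hθ ex) hu2 (smooth_D hθ ez) e t p,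
    D_shapeC huT s e t p, D_comm hθ e et t p, D_comm hθ e ex t p, D_comm hθ e ez t p] at E4
  rw [E1, E2, E3]
  linear_combination s * hG1 t p - (D e θ t p) * hG2 t p - vT t p * E4

end KelvinAux

open KelvinAux

theorem kelvin_integrand_transport
    (uS vS : ℝ → ℝ × ℝ → ℝ × ℝ) (uT vT γS piS θS : ℝ → ℝ × ℝ → ℝ) (s : ℝ)
    (huS : SmoothV uS) (hvS : SmoothV vS) (huT : SmoothS uT) (hvT : SmoothS vT)
    (hγS : SmoothS γS) (hpi : SmoothS piS) (hθS : SmoothS θS)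
    (hG1x : ∀ t p, pt (c1 vS) t p + adv uS (c1 vS) t p + gradT1 uS vS t p
        = px (piS t) p - vT t p * px (uT t) p - γS t p * px (θS t) p)
    (hG1z : ∀ t p, pt (c2 vS) t p + adv uS (c2 vS) t p + gradT2 uS vS t p
        = pz (piS t) p - vT t p * pz (uT t) p - γS t p * pz (θS t) p)
    (hG2 : ∀ t p, pt vT t p + adv uS vT t p = -(s * γS t p))
    (hG3 : ∀ t p, pt θS t p + adv uS θS t p = -(s * uT t p))
    (W : ℝ → ℝ × ℝ → ℝ × ℝ)
    (hW : ∀ t p, W t p = (s * (vS t p).1 - vT t p * px (θS t) p,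
                          s * (vS t p).2 - vT t p * pz (θS t) p)) :
    ∀ t p,
      (pt (c1 W) t p + adv uS (c1 W) t p + gradT1 uS W t p = s * px (piS t) p) ∧
      (pt (c2 W) t p + adv uS (c2 W) t p + gradT2 uS W t p = s * pz (piS t) p) := by
  -- smoothness of components
  have hu1 : SmoothS (c1 uS) := by
    have : ContDiff ℝ (⊤ : ℕ∞) (fun q : ℝ × (ℝ × ℝ) => (uS q.1 q.2).1) := contDiff_fst.comp huS
    exact this
  have hu2 : SmoothS (c2 uS) := by
    have : ContDiff ℝ (⊤ : ℕ∞) (fun q : ℝ × (ℝ × ℝ) => (uS q.1 q.2).2) := contDiff_snd.comp huS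
    exact this
  have hv1 : SmoothS (c1 vS) := by
    have : ContDiff ℝ (⊤ : ℕ∞) (fun q : ℝ × (ℝ × ℝ) => (vS q.1 q.2).1) := contDiff_fst.comp hvS
    exact this
  have hv2 : SmoothS (c2 vS) := by
    have : ContDiff ℝ (⊤ : ℕ∞) (fun q : ℝ × (ℝ × ℝ) => (vS q.1 q.2).2) := contDiff_snd.comp hvS
    exact this
  -- hypotheses in D-form
  have h1x : ∀ t p, D et (c1 vS) t p
      + ((uS t p).1 * D ex (c1 vS) t p + (uS t p).2 * D ez (c1 vS) t p)
      + ((vS t p).1 * D ex (c1 uS) t p + (vS t p).2 * D ex (c2 uS) t p)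
      = D ex piS t p - vT t p * D ex uT t p - γS t p * D ex θS t p := by
    intro t p
    have h := hG1x t p
    simp only [adv, gradT1] at h
    rw [pt_eq hv1, px_eq hv1, pz_eq hv1, px_eq hu1, px_eq hu2, px_eq hpi, px_eq huT,
      px_eq hθS] at h
    exact h
  have h1z : ∀ t p, D et (c2 vS) t p
      + ((uS t p).1 * D ex (c2 vS) t p + (uS t p).2 * D ez (c2 vS) t p)
      + ((vS t p).1 * D ez (c1 uS) t p + (vS t p).2 * D ez (c2 uS) t p)
      = D ez piS t p - vT t p * D ez uT t p - γS t p * D ez θS t p := by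
    intro t p
    have h := hG1z t p
    simp only [adv, gradT2] at h
    rw [pt_eq hv2, px_eq hv2, pz_eq hv2, pz_eq hu1, pz_eq hu2, pz_eq hpi, pz_eq huT,
      pz_eq hθS] at h
    exact h
  have h2 : ∀ t p, D et vT t p
      + ((uS t p).1 * D ex vT t p + (uS t p).2 * D ez vT t p) = -(s * γS t p) := by
    intro t p
    have h := hG2 t p
    simp only [adv] at h
    rw [pt_eq hvT, px_eq hvT, pz_eq hvT] at h
    exact h
  have h3 : ∀ t p, D et θS t p
      + ((uS t p).1 * D ex θS t p + (uS t p).2 * D ez θS t p) = -(s * uT t p) := by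
    intro t p
    have h := hG3 t p
    simp only [adv] at h
    rw [pt_eq hθS, px_eq hθS, pz_eq hθS] at h
    exact h
  -- W components
  have hW1 : c1 W = fun t p => s * c1 vS t p - vT t p * D ex θS t p := by
    funext t p
    show (W t p).1 = _
    rw [hW t p]
    simp only [c1]
    rw [px_eq hθS]
  have hW2 : c2 W = fun t p => s * c2 vS t p - vT t p * D ez θS t p := by
    funext t p
    show (W t p).2 = _
    rw [hW t p]
    simp only [c2]
    rw [pz_eq hθS]
  have hsW1 : SmoothS (c1 W) := by
    rw [hW1]; exact smooth_shapeA hv1 hvT (smooth_D hθS ex) s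
  have hsW2 : SmoothS (c2 W) := by
    rw [hW2]; exact smooth_shapeA hv2 hvT (smooth_D hθS ez) s
  intro t p
  constructor
  · have goal := key s ex (c1 uS) (c2 uS) (c1 vS) (c1 vS) (c2 vS) vT uT γS piS θS
      hu1 hu2 hv1 hvT huT hθS h1x h2 h3 t p
    simp only [adv, gradT1]
    rw [pt_eq hsW1, px_eq hsW1, pz_eq hsW1, px_eq hu1, px_eq hu2, px_eq hpi, hW t p, hW1]
    rw [px_eq hθS, pz_eq hθS]
    exact goal
  · have goal := key s ez (c1 uS) (c2 uS) (c2 vS) (c1 vS) (c2 vS) vT uT γS piS θS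
      hu1 hu2 hv2 hvT huT hθS h1z h2 h3 t p
    simp only [adv, gradT2]
    rw [pt_eq hsW2, px_eq hsW2, pz_eq hsW2, pz_eq hu1, pz_eq hu2, pz_eq hpi, hW t p, hW2]
    rw [px_eq hθS, pz_eq hθS]
    exact goal
end
end

section
/- (Kelvin–Noether circulation theorem for slice models.) Suppose the smooth fields u_S, v_S, u_T, v_T, γ_S, π, θ_S satisfy (G1) ∂_t v_S + (u_S·∇)v_S + (∇u_S)ᵀ v_S = ∇π − v_T ∇u_T − γ_S ∇θ_S, (G2) ∂_t v_T + u_S·∇v_T = −s γ_S, and (G3) ∂_t θ_S + u_S·∇θ_S = −s u_T, where s ∈ ℝ is a constant. Then for every loop c advected by u_S, the circulation I(t) := ∫₀¹ [s v_S − v_T ∇θ_S](t, c(t,σ)) · ∂_σ c(t,σ) dσ is constant in t. -/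
noncomputable section

/-- A loop (σ ↦ c t σ, closed at σ = 0, 1) advected by the velocity field u. -/
def AdvectedLoop (u : ℝ → ℝ × ℝ → ℝ × ℝ) (c : ℝ → ℝ → ℝ × ℝ) : Prop :=
  ContDiff ℝ (⊤ : ℕ∞) (fun q : ℝ × ℝ => c q.1 q.2) ∧
  (∀ t, c t 0 = c t 1) ∧
  (∀ t σ, HasDerivAt (fun τ => c τ σ) (u t (c t σ)) t)

namespace KN

variable {E F : Type*} [NormedAddCommGroup E] [NormedSpace ℝ E]
  [NormedAddCommGroup F] [NormedSpace ℝ F]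

/-- generic composition of a differentiable map with a curve -/
theorem comp_line {f : E → F} {q v : E} {x : ℝ} {γ : ℝ → E}
    (hγ : HasDerivAt γ v x) (hq : γ x = q) (hf : DifferentiableAt ℝ f q) :
    HasDerivAt (fun s => f (γ s)) (fderiv ℝ f q v) x := by
  subst hq
  exact hf.hasFDerivAt.comp_hasDerivAt x hγ

/-- derivative of `s ↦ fderiv f (γ s) w` -/
theorem comp_line_fderiv {f : E → F} (hf : ContDiff ℝ (⊤ : ℕ∞) f) {q v : E} {x : ℝ} {γ : ℝ → E}
    (hγ : HasDerivAt γ v x) (hq : γ x = q) (w : E) :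
    HasDerivAt (fun s => fderiv ℝ f (γ s) w) (fderiv ℝ (fderiv ℝ f) q v w) x := by
  have hdf : DifferentiableAt ℝ (fderiv ℝ f) q :=
    ((hf.fderiv_right (m := (⊤ : ℕ∞)) (by simp)).differentiable (by simp)) q
  have h1 : HasDerivAt (fun s => fderiv ℝ f (γ s)) (fderiv ℝ (fderiv ℝ f) q v) x :=
    comp_line hγ hq hdf
  have h2 := h1.clm_apply (hasDerivAt_const x w)
  simpa using h2

/-- symmetry of second derivative -/
theorem symm2 {f : E → F} (hf : ContDiff ℝ (⊤ : ℕ∞) f) (q v w : E) :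
    fderiv ℝ (fderiv ℝ f) q v w = fderiv ℝ (fderiv ℝ f) q w v :=
  hf.contDiffAt.isSymmSndFDerivAt (by rw [minSmoothness_of_isRCLikeNormedField]; exact WithTop.coe_le_coe.2 (le_top : (2:ℕ∞) ≤ ⊤)) v w

-- curves for partial derivatives on ℝ × (ℝ × ℝ)
theorem line_t (t : ℝ) (p : ℝ × ℝ) :
    HasDerivAt (fun s : ℝ => ((s, p) : ℝ × ℝ × ℝ)) (1, (0, 0)) t :=
  HasDerivAt.prodMk (hasDerivAt_id t) (hasDerivAt_const t p)

theorem line_x (t : ℝ) (p : ℝ × ℝ) :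
    HasDerivAt (fun x : ℝ => ((t, (x, p.2)) : ℝ × ℝ × ℝ)) (0, (1, 0)) p.1 :=
  HasDerivAt.prodMk (hasDerivAt_const p.1 t) (HasDerivAt.prodMk (hasDerivAt_id p.1) (hasDerivAt_const p.1 p.2))

theorem line_z (t : ℝ) (p : ℝ × ℝ) :
    HasDerivAt (fun z : ℝ => ((t, (p.1, z)) : ℝ × ℝ × ℝ)) (0, (0, 1)) p.2 :=
  HasDerivAt.prodMk (hasDerivAt_const p.2 t) (HasDerivAt.prodMk (hasDerivAt_const p.2 p.1) (hasDerivAt_id p.2))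

end KN

namespace KN

def Jn (f : ℝ → ℝ × ℝ → ℝ) : ℝ × (ℝ × ℝ) → ℝ := fun q => f q.1 q.2
def Dt (f : ℝ → ℝ × ℝ → ℝ) (q : ℝ × (ℝ × ℝ)) : ℝ := fderiv ℝ (Jn f) q (1, (0, 0))
def Dx (f : ℝ → ℝ × ℝ → ℝ) (q : ℝ × (ℝ × ℝ)) : ℝ := fderiv ℝ (Jn f) q (0, (1, 0))
def Dz (f : ℝ → ℝ × ℝ → ℝ) (q : ℝ × (ℝ × ℝ)) : ℝ := fderiv ℝ (Jn f) q (0, (0, 1))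

theorem smoothS_iff {f : ℝ → ℝ × ℝ → ℝ} : SmoothS f ↔ ContDiff ℝ (⊤ : ℕ∞) (Jn f) := Iff.rfl

theorem diffJn {f : ℝ → ℝ × ℝ → ℝ} (hf : SmoothS f) (q : ℝ × (ℝ × ℝ)) :
    DifferentiableAt ℝ (Jn f) q := (smoothS_iff.1 hf).differentiable (by simp) q

theorem pt_eq {f : ℝ → ℝ × ℝ → ℝ} (hf : SmoothS f) (t : ℝ) (p : ℝ × ℝ) :
    pt f t p = Dt f (t, p) :=
  (comp_line (line_t t p) rfl (diffJn hf (t, p))).deriv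

theorem pxS_eq {f : ℝ → ℝ × ℝ → ℝ} (hf : SmoothS f) (t : ℝ) (p : ℝ × ℝ) :
    px (f t) p = Dx f (t, p) :=
  (comp_line (line_x t p) rfl (diffJn hf (t, p))).deriv

theorem pzS_eq {f : ℝ → ℝ × ℝ → ℝ} (hf : SmoothS f) (t : ℝ) (p : ℝ × ℝ) :
    pz (f t) p = Dz f (t, p) :=
  (comp_line (line_z t p) rfl (diffJn hf (t, p))).deriv

theorem smooth_Dt {f : ℝ → ℝ × ℝ → ℝ} (hf : SmoothS f) : ContDiff ℝ (⊤ : ℕ∞) (Dt f) :=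
  ((smoothS_iff.1 hf).fderiv_right (by simp)).clm_apply contDiff_const

theorem smooth_Dx {f : ℝ → ℝ × ℝ → ℝ} (hf : SmoothS f) : ContDiff ℝ (⊤ : ℕ∞) (Dx f) :=
  ((smoothS_iff.1 hf).fderiv_right (by simp)).clm_apply contDiff_const

theorem smooth_Dz {f : ℝ → ℝ × ℝ → ℝ} (hf : SmoothS f) : ContDiff ℝ (⊤ : ℕ∞) (Dz f) :=
  ((smoothS_iff.1 hf).fderiv_right (by simp)).clm_apply contDiff_const

variable {E F : Type*} [NormedAddCommGroup E] [NormedSpace ℝ E]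
  [NormedAddCommGroup F] [NormedSpace ℝ F]

theorem fderiv_clm_apply_const {g : E → F} (hg : ContDiff ℝ (⊤ : ℕ∞) g) (q v w : E) :
    fderiv ℝ (fun q' => fderiv ℝ g q' w) q v = fderiv ℝ (fderiv ℝ g) q v w := by
  have hdf : DifferentiableAt ℝ (fderiv ℝ g) q :=
    (hg.fderiv_right (m := (⊤ : ℕ∞)) (by simp)).differentiable (by simp) q
  have h := hdf.hasFDerivAt.clm_apply (hasFDerivAt_const w q)
  rw [h.fderiv]
  simp

theorem Dcomm {g : E → F} (hg : ContDiff ℝ (⊤ : ℕ∞) g) (q v w : E) :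
    fderiv ℝ (fun q' => fderiv ℝ g q' w) q v = fderiv ℝ (fun q' => fderiv ℝ g q' v) q w := by
  rw [fderiv_clm_apply_const hg, fderiv_clm_apply_const hg, symm2 hg]

/-- splitting a fderiv on ℝ × (ℝ × ℝ) over coordinates -/
theorem split3 {f : ℝ → ℝ × ℝ → ℝ} (hf : SmoothS f) (q : ℝ × (ℝ × ℝ)) (a : ℝ) (v : ℝ × ℝ) :
    fderiv ℝ (Jn f) q (a, v) = a * Dt f q + v.1 * Dx f q + v.2 * Dz f q := by
  have : ((a, v) : ℝ × ℝ × ℝ)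
      = a • ((1:ℝ), ((0:ℝ), (0:ℝ))) + v.1 • ((0:ℝ), ((1:ℝ), (0:ℝ)))
        + v.2 • ((0:ℝ), ((0:ℝ), (1:ℝ))) := by
    ext <;> simp
  rw [this, map_add, map_add, map_smul, map_smul, map_smul]
  simp [Dt, Dx, Dz, smul_eq_mul]

/-- material derivative chain rule along a curve -/
theorem material {f : ℝ → ℝ × ℝ → ℝ} (hf : SmoothS f) {γ : ℝ → ℝ × ℝ} {v : ℝ × ℝ} {t : ℝ}
    (hγ : HasDerivAt γ v t) :
    HasDerivAt (fun τ => f τ (γ τ))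
      (Dt f (t, γ t) + v.1 * Dx f (t, γ t) + v.2 * Dz f (t, γ t)) t := by
  have hcurve : HasDerivAt (fun τ : ℝ => ((τ, γ τ) : ℝ × ℝ × ℝ)) (1, v) t :=
    HasDerivAt.prodMk (hasDerivAt_id t) hγ
  have h := comp_line hcurve rfl (diffJn hf (t, γ t))
  rw [split3 hf] at h
  simpa [Jn] using h

end KN

namespace KN

/-- spatial chain rule along a curve at fixed time -/
theorem spatial {f : ℝ → ℝ × ℝ → ℝ} (hf : SmoothS f) {γ : ℝ → ℝ × ℝ} {v : ℝ × ℝ} {x t : ℝ}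
    (hγ : HasDerivAt γ v x) :
    HasDerivAt (fun y => f t (γ y)) (v.1 * Dx f (t, γ x) + v.2 * Dz f (t, γ x)) x := by
  have h := comp_line (HasDerivAt.prodMk (hasDerivAt_const x t) hγ) rfl (diffJn hf (t, γ x))
  rw [split3 hf] at h
  simpa [Jn] using h

theorem swap_tx {f : ℝ → ℝ × ℝ → ℝ} (hf : SmoothS f) (q : ℝ × (ℝ × ℝ)) :
    fderiv ℝ (Dt f) q (0, (1, 0)) = fderiv ℝ (Dx f) q (1, (0, 0)) :=
  Dcomm (smoothS_iff.1 hf) q _ _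

theorem swap_tz {f : ℝ → ℝ × ℝ → ℝ} (hf : SmoothS f) (q : ℝ × (ℝ × ℝ)) :
    fderiv ℝ (Dt f) q (0, (0, 1)) = fderiv ℝ (Dz f) q (1, (0, 0)) :=
  Dcomm (smoothS_iff.1 hf) q _ _

theorem swap_zx {f : ℝ → ℝ × ℝ → ℝ} (hf : SmoothS f) (q : ℝ × (ℝ × ℝ)) :
    fderiv ℝ (Dz f) q (0, (1, 0)) = fderiv ℝ (Dx f) q (0, (0, 1)) :=
  Dcomm (smoothS_iff.1 hf) q _ _

def CC (c : ℝ → ℝ → ℝ × ℝ) : ℝ × ℝ → ℝ × ℝ := fun q => c q.1 q.2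
def EE (c : ℝ → ℝ → ℝ × ℝ) (q : ℝ × ℝ) : ℝ × ℝ := fderiv ℝ (CC c) q (0, 1)

def FF (vS : ℝ → ℝ × ℝ → ℝ × ℝ) (vT θS : ℝ → ℝ × ℝ → ℝ) (s : ℝ)
    (c : ℝ → ℝ → ℝ × ℝ) : ℝ × ℝ → ℝ := fun q =>
  (s * (vS q.1 (c q.1 q.2)).1 - vT q.1 (c q.1 q.2) * Dx θS (q.1, c q.1 q.2)) * (EE c q).1 +
  (s * (vS q.1 (c q.1 q.2)).2 - vT q.1 (c q.1 q.2) * Dz θS (q.1, c q.1 q.2)) * (EE c q).2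

theorem smooth_EE {c : ℝ → ℝ → ℝ × ℝ} (hC : ContDiff ℝ (⊤ : ℕ∞) (CC c)) : ContDiff ℝ (⊤ : ℕ∞) (EE c) :=
  (hC.fderiv_right (by simp)).clm_apply contDiff_const

theorem smooth_FF {vS : ℝ → ℝ × ℝ → ℝ × ℝ} {vT θS : ℝ → ℝ × ℝ → ℝ} {s : ℝ}
    {c : ℝ → ℝ → ℝ × ℝ} (hvS : SmoothV vS) (hvT : SmoothS vT) (hθS : SmoothS θS)
    (hC : ContDiff ℝ (⊤ : ℕ∞) (CC c)) : ContDiff ℝ (⊤ : ℕ∞) (FF vS vT θS s c) := by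
  have hmap : ContDiff ℝ (⊤ : ℕ∞) (fun q : ℝ × ℝ => ((q.1, c q.1 q.2) : ℝ × (ℝ × ℝ))) :=
    contDiff_fst.prodMk hC
  have h1 : ContDiff ℝ (⊤ : ℕ∞) (fun q : ℝ × ℝ => (vS q.1 (c q.1 q.2)).1) :=
    (contDiff_fst.comp (hvS.comp hmap))
  have h2 : ContDiff ℝ (⊤ : ℕ∞) (fun q : ℝ × ℝ => (vS q.1 (c q.1 q.2)).2) :=
    (contDiff_snd.comp (hvS.comp hmap))
  have hb : ContDiff ℝ (⊤ : ℕ∞) (fun q : ℝ × ℝ => vT q.1 (c q.1 q.2)) := hvT.comp hmap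
  have hx : ContDiff ℝ (⊤ : ℕ∞) (fun q : ℝ × ℝ => Dx θS (q.1, c q.1 q.2)) :=
    (smooth_Dx hθS).comp hmap
  have hz : ContDiff ℝ (⊤ : ℕ∞) (fun q : ℝ × ℝ => Dz θS (q.1, c q.1 q.2)) :=
    (smooth_Dz hθS).comp hmap
  have hE1 : ContDiff ℝ (⊤ : ℕ∞) (fun q : ℝ × ℝ => (EE c q).1) := contDiff_fst.comp (smooth_EE hC)
  have hE2 : ContDiff ℝ (⊤ : ℕ∞) (fun q : ℝ × ℝ => (EE c q).2) := contDiff_snd.comp (smooth_EE hC)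
  exact (((contDiff_const.mul h1).sub (hb.mul hx)).mul hE1).add
    (((contDiff_const.mul h2).sub (hb.mul hz)).mul hE2)

end KN

namespace KN

theorem key_fderiv
    (uS vS : ℝ → ℝ × ℝ → ℝ × ℝ) (uT vT γS piS θS : ℝ → ℝ × ℝ → ℝ) (s : ℝ)
    (huS : SmoothV uS) (hvS : SmoothV vS) (huT : SmoothS uT) (hvT : SmoothS vT)
    (hγS : SmoothS γS) (hpi : SmoothS piS) (hθS : SmoothS θS)
    (hG1x : ∀ t p, pt (c1 vS) t p + adv uS (c1 vS) t p + gradT1 uS vS t p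
        = px (piS t) p - vT t p * px (uT t) p - γS t p * px (θS t) p)
    (hG1z : ∀ t p, pt (c2 vS) t p + adv uS (c2 vS) t p + gradT2 uS vS t p
        = pz (piS t) p - vT t p * pz (uT t) p - γS t p * pz (θS t) p)
    (hG2 : ∀ t p, pt vT t p + adv uS vT t p = -(s * γS t p))
    (hG3 : ∀ t p, pt θS t p + adv uS θS t p = -(s * uT t p))
    (c : ℝ → ℝ → ℝ × ℝ)
    (hC : ContDiff ℝ (⊤ : ℕ∞) (CC c))
    (hflow : ∀ t σ, HasDerivAt (fun τ => c τ σ) (uS t (c t σ)) t)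
    (t σ : ℝ) :
    fderiv ℝ (FF vS vT θS s c) (t, σ) (1, 0)
      = s * ((EE c (t, σ)).1 * Dx piS (t, c t σ) + (EE c (t, σ)).2 * Dz piS (t, c t σ)) := by
  -- smoothness of components
  have hsvS1 : SmoothS (c1 vS) := contDiff_fst.comp hvS
  have hsvS2 : SmoothS (c2 vS) := contDiff_snd.comp hvS
  have hsu1 : SmoothS (c1 uS) := contDiff_fst.comp huS
  have hsu2 : SmoothS (c2 uS) := contDiff_snd.comp huS
  have hθx : SmoothS (fun t p => Dx θS (t, p)) := smooth_Dx hθS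
  have hθz : SmoothS (fun t p => Dz θS (t, p)) := smooth_Dz hθS
  have hCdiff : ∀ q, DifferentiableAt ℝ (CC c) q := fun q => hC.differentiable (by simp) q
  -- converted field equations
  have hG2' : ∀ t p, Dt vT (t, p) + (uS t p).1 * Dx vT (t, p) + (uS t p).2 * Dz vT (t, p)
      = -(s * γS t p) := by
    intro t p
    have h := hG2 t p
    simp only [adv] at h
    rw [pt_eq hvT, pxS_eq hvT, pzS_eq hvT] at h
    linarith
  have hG3' : ∀ t p, Dt θS (t, p) + (uS t p).1 * Dx θS (t, p) + (uS t p).2 * Dz θS (t, p)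
      = -(s * uT t p) := by
    intro t p
    have h := hG3 t p
    simp only [adv] at h
    rw [pt_eq hθS, pxS_eq hθS, pzS_eq hθS] at h
    linarith
  have hG1x' : ∀ t p, Dt (c1 vS) (t, p) + (uS t p).1 * Dx (c1 vS) (t, p)
      + (uS t p).2 * Dz (c1 vS) (t, p)
      + ((vS t p).1 * Dx (c1 uS) (t, p) + (vS t p).2 * Dx (c2 uS) (t, p))
      = Dx piS (t, p) - vT t p * Dx uT (t, p) - γS t p * Dx θS (t, p) := by
    intro t p
    have h := hG1x t p
    simp only [adv, gradT1] at h
    rw [pt_eq hsvS1, pxS_eq hsvS1, pzS_eq hsvS1, pxS_eq hsu1, pxS_eq hsu2,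
      pxS_eq hpi, pxS_eq huT, pxS_eq hθS] at h
    linarith
  have hG1z' : ∀ t p, Dt (c2 vS) (t, p) + (uS t p).1 * Dx (c2 vS) (t, p)
      + (uS t p).2 * Dz (c2 vS) (t, p)
      + ((vS t p).1 * Dz (c1 uS) (t, p) + (vS t p).2 * Dz (c2 uS) (t, p))
      = Dz piS (t, p) - vT t p * Dz uT (t, p) - γS t p * Dz θS (t, p) := by
    intro t p
    have h := hG1z t p
    simp only [adv, gradT2] at h
    rw [pt_eq hsvS2, pxS_eq hsvS2, pzS_eq hsvS2, pzS_eq hsu1, pzS_eq hsu2,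
      pzS_eq hpi, pzS_eq huT, pzS_eq hθS] at h
    linarith
  -- KEY: x-derivative of G3
  have KEY1x : ∀ t p, fderiv ℝ (Dx θS) (t, p) (1, (0, 0))
      + Dx (c1 uS) (t, p) * Dx θS (t, p)
      + (uS t p).1 * fderiv ℝ (Dx θS) (t, p) (0, (1, 0))
      + Dx (c2 uS) (t, p) * Dz θS (t, p)
      + (uS t p).2 * fderiv ℝ (Dx θS) (t, p) (0, (0, 1))
      = -(s * Dx uT (t, p)) := by
    intro t p
    have lx := line_x t p
    have h1 : HasDerivAt (fun x => Dt θS (t, (x, p.2))) (fderiv ℝ (Dt θS) (t, p) (0, (1, 0))) p.1 :=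
      comp_line lx rfl (((smooth_Dt hθS).differentiable (by simp)) _)
    have h2 : HasDerivAt (fun x => (uS t (x, p.2)).1) (Dx (c1 uS) (t, p)) p.1 :=
      comp_line lx rfl (diffJn hsu1 _)
    have h3 : HasDerivAt (fun x => Dx θS (t, (x, p.2))) (fderiv ℝ (Dx θS) (t, p) (0, (1, 0))) p.1 :=
      comp_line lx rfl (((smooth_Dx hθS).differentiable (by simp)) _)
    have h4 : HasDerivAt (fun x => (uS t (x, p.2)).2) (Dx (c2 uS) (t, p)) p.1 :=
      comp_line lx rfl (diffJn hsu2 _)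
    have h5 : HasDerivAt (fun x => Dz θS (t, (x, p.2))) (fderiv ℝ (Dz θS) (t, p) (0, (1, 0))) p.1 :=
      comp_line lx rfl (((smooth_Dz hθS).differentiable (by simp)) _)
    have hR : HasDerivAt (fun x => -(s * uT t (x, p.2))) (-(s * Dx uT (t, p))) p.1 :=
      ((comp_line lx rfl (diffJn huT _)).const_mul s).neg
    have hL := (h1.add (h2.mul h3)).add (h4.mul h5)
    have heq : (fun x => Dt θS (t, (x, p.2)) + (uS t (x, p.2)).1 * Dx θS (t, (x, p.2))
        + (uS t (x, p.2)).2 * Dz θS (t, (x, p.2)))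
        = fun x => -(s * uT t (x, p.2)) := funext fun x => hG3' t (x, p.2)
    have huniq := (heq ▸ (show HasDerivAt (fun x => Dt θS (t, (x, p.2)) + (uS t (x, p.2)).1 * Dx θS (t, (x, p.2))
        + (uS t (x, p.2)).2 * Dz θS (t, (x, p.2))) _ p.1 from hL)).unique hR
    rw [swap_tx hθS, swap_zx hθS] at huniq
    linarith
  have KEY1z : ∀ t p, fderiv ℝ (Dz θS) (t, p) (1, (0, 0))
      + Dz (c1 uS) (t, p) * Dx θS (t, p)
      + (uS t p).1 * fderiv ℝ (Dz θS) (t, p) (0, (1, 0))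
      + Dz (c2 uS) (t, p) * Dz θS (t, p)
      + (uS t p).2 * fderiv ℝ (Dz θS) (t, p) (0, (0, 1))
      = -(s * Dz uT (t, p)) := by
    intro t p
    have lz := line_z t p
    have h1 : HasDerivAt (fun z => Dt θS (t, (p.1, z))) (fderiv ℝ (Dt θS) (t, p) (0, (0, 1))) p.2 :=
      comp_line lz rfl (((smooth_Dt hθS).differentiable (by simp)) _)
    have h2 : HasDerivAt (fun z => (uS t (p.1, z)).1) (Dz (c1 uS) (t, p)) p.2 :=
      comp_line lz rfl (diffJn hsu1 _)
    have h3 : HasDerivAt (fun z => Dx θS (t, (p.1, z))) (fderiv ℝ (Dx θS) (t, p) (0, (0, 1))) p.2 :=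
      comp_line lz rfl (((smooth_Dx hθS).differentiable (by simp)) _)
    have h4 : HasDerivAt (fun z => (uS t (p.1, z)).2) (Dz (c2 uS) (t, p)) p.2 :=
      comp_line lz rfl (diffJn hsu2 _)
    have h5 : HasDerivAt (fun z => Dz θS (t, (p.1, z))) (fderiv ℝ (Dz θS) (t, p) (0, (0, 1))) p.2 :=
      comp_line lz rfl (((smooth_Dz hθS).differentiable (by simp)) _)
    have hR : HasDerivAt (fun z => -(s * uT t (p.1, z))) (-(s * Dz uT (t, p))) p.2 :=
      ((comp_line lz rfl (diffJn huT _)).const_mul s).neg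
    have hL := (h1.add (h2.mul h3)).add (h4.mul h5)
    have heq : (fun z => Dt θS (t, (p.1, z)) + (uS t (p.1, z)).1 * Dx θS (t, (p.1, z))
        + (uS t (p.1, z)).2 * Dz θS (t, (p.1, z)))
        = fun z => -(s * uT t (p.1, z)) := funext fun z => hG3' t (p.1, z)
    have huniq := (heq ▸ (show HasDerivAt (fun z => Dt θS (t, (p.1, z)) + (uS t (p.1, z)).1 * Dx θS (t, (p.1, z))
        + (uS t (p.1, z)).2 * Dz θS (t, (p.1, z))) _ p.2 from hL)).unique hR
    rw [swap_tz hθS, ← swap_zx hθS] at huniq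
    linarith
  -- σ-derivative of the loop
  have hEσ : ∀ t' σ', HasDerivAt (fun σ'' => c t' σ'') (EE c (t', σ')) σ' := fun t' σ' =>
    comp_line (HasDerivAt.prodMk (hasDerivAt_const σ' t') (hasDerivAt_id σ')) rfl (hCdiff _)
  have hCd : ∀ t' σ', fderiv ℝ (CC c) (t', σ') (1, 0) = uS t' (c t' σ') := fun t' σ' =>
    HasDerivAt.unique
      (comp_line (HasDerivAt.prodMk (hasDerivAt_id t') (hasDerivAt_const t' σ')) rfl (hCdiff _))
      (hflow t' σ')
  have hdtE : HasDerivAt (fun τ => EE c (τ, σ))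
      (fderiv ℝ (fderiv ℝ (CC c)) (t, σ) (1, 0) (0, 1)) t :=
    comp_line_fderiv hC (HasDerivAt.prodMk (hasDerivAt_id t) (hasDerivAt_const t σ)) rfl (0, 1)
  have h6 : HasDerivAt (fun σ' => fderiv ℝ (CC c) (t, σ') (1, 0))
      (fderiv ℝ (fderiv ℝ (CC c)) (t, σ) (0, 1) (1, 0)) σ :=
    comp_line_fderiv hC (HasDerivAt.prodMk (hasDerivAt_const σ t) (hasDerivAt_id σ)) rfl (1, 0)
  have h6' : HasDerivAt (fun σ' => uS t (c t σ'))
      (fderiv ℝ (fderiv ℝ (CC c)) (t, σ) (0, 1) (1, 0)) σ := by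
    rw [show (fun σ' => uS t (c t σ')) = fun σ' => fderiv ℝ (CC c) (t, σ') (1, 0) from
      funext fun σ' => (hCd t σ').symm]
    exact h6
  have h7 : HasDerivAt (fun σ' => uS t (c t σ'))
      (((EE c (t, σ)).1 * Dx (c1 uS) (t, c t σ) + (EE c (t, σ)).2 * Dz (c1 uS) (t, c t σ),
        (EE c (t, σ)).1 * Dx (c2 uS) (t, c t σ) + (EE c (t, σ)).2 * Dz (c2 uS) (t, c t σ))) σ :=
    (spatial hsu1 (hEσ t σ)).prodMk (spatial hsu2 (hEσ t σ))
  have hAval := h6'.unique h7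
  have hswap : fderiv ℝ (fderiv ℝ (CC c)) (t, σ) (1, 0) (0, 1)
      = fderiv ℝ (fderiv ℝ (CC c)) (t, σ) (0, 1) (1, 0) := symm2 hC (t, σ) (1, 0) (0, 1)
  have hA1 : (fderiv ℝ (fderiv ℝ (CC c)) (t, σ) (1, 0) (0, 1)).1
      = (EE c (t, σ)).1 * Dx (c1 uS) (t, c t σ) + (EE c (t, σ)).2 * Dz (c1 uS) (t, c t σ) := by
    rw [hswap, hAval]
  have hA2 : (fderiv ℝ (fderiv ℝ (CC c)) (t, σ) (1, 0) (0, 1)).2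
      = (EE c (t, σ)).1 * Dx (c2 uS) (t, c t σ) + (EE c (t, σ)).2 * Dz (c2 uS) (t, c t σ) := by
    rw [hswap, hAval]
  have hE1t : HasDerivAt (fun τ => (EE c (τ, σ)).1)
      ((fderiv ℝ (fderiv ℝ (CC c)) (t, σ) (1, 0) (0, 1)).1) t :=
    (ContinuousLinearMap.fst ℝ ℝ ℝ).hasFDerivAt.comp_hasDerivAt t hdtE
  have hE2t : HasDerivAt (fun τ => (EE c (τ, σ)).2)
      ((fderiv ℝ (fderiv ℝ (CC c)) (t, σ) (1, 0) (0, 1)).2) t :=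
    (ContinuousLinearMap.snd ℝ ℝ ℝ).hasFDerivAt.comp_hasDerivAt t hdtE
  -- material derivatives along the flow
  have hMa1 : HasDerivAt (fun τ => (vS τ (c τ σ)).1)
      (Dt (c1 vS) (t, c t σ) + (uS t (c t σ)).1 * Dx (c1 vS) (t, c t σ)
        + (uS t (c t σ)).2 * Dz (c1 vS) (t, c t σ)) t := material hsvS1 (hflow t σ)
  have hMa2 : HasDerivAt (fun τ => (vS τ (c τ σ)).2)
      (Dt (c2 vS) (t, c t σ) + (uS t (c t σ)).1 * Dx (c2 vS) (t, c t σ)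
        + (uS t (c t σ)).2 * Dz (c2 vS) (t, c t σ)) t := material hsvS2 (hflow t σ)
  have hMb : HasDerivAt (fun τ => vT τ (c τ σ))
      (Dt vT (t, c t σ) + (uS t (c t σ)).1 * Dx vT (t, c t σ)
        + (uS t (c t σ)).2 * Dz vT (t, c t σ)) t := material hvT (hflow t σ)
  have hMX : HasDerivAt (fun τ => Dx θS (τ, c τ σ))
      (fderiv ℝ (Dx θS) (t, c t σ) (1, (0, 0))
        + (uS t (c t σ)).1 * fderiv ℝ (Dx θS) (t, c t σ) (0, (1, 0))
        + (uS t (c t σ)).2 * fderiv ℝ (Dx θS) (t, c t σ) (0, (0, 1))) t :=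
    material hθx (hflow t σ)
  have hMZ : HasDerivAt (fun τ => Dz θS (τ, c τ σ))
      (fderiv ℝ (Dz θS) (t, c t σ) (1, (0, 0))
        + (uS t (c t σ)).1 * fderiv ℝ (Dz θS) (t, c t σ) (0, (1, 0))
        + (uS t (c t σ)).2 * fderiv ℝ (Dz θS) (t, c t σ) (0, (0, 1))) t :=
    material hθz (hflow t σ)
  -- product assembly
  have hF1 := ((hMa1.const_mul s).sub (hMb.mul hMX)).mul hE1t
  have hF2 := ((hMa2.const_mul s).sub (hMb.mul hMZ)).mul hE2t
  have hFtot := hF1.add hF2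
  have hFd : HasDerivAt (fun τ => FF vS vT θS s c (τ, σ))
      (fderiv ℝ (FF vS vT θS s c) (t, σ) (1, 0)) t :=
    comp_line (HasDerivAt.prodMk (hasDerivAt_id t) (hasDerivAt_const t σ)) rfl
      ((smooth_FF hvS hvT hθS hC).differentiable (by simp) _)
  have hval := hFd.unique hFtot
  rw [hval]
  simp only [Pi.add_apply, Pi.sub_apply, Pi.mul_apply]
  linear_combination (s * (EE c (t, σ)).1) * hG1x' t (c t σ)
    + (s * (EE c (t, σ)).2) * hG1z' t (c t σ)
    - (Dx θS (t, c t σ) * (EE c (t, σ)).1 + Dz θS (t, c t σ) * (EE c (t, σ)).2) * hG2' t (c t σ)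
    - (vT t (c t σ) * (EE c (t, σ)).1) * KEY1x t (c t σ)
    - (vT t (c t σ) * (EE c (t, σ)).2) * KEY1z t (c t σ)
    + (s * (vS t (c t σ)).1 - vT t (c t σ) * Dx θS (t, c t σ)) * hA1
    + (s * (vS t (c t σ)).2 - vT t (c t σ) * Dz θS (t, c t σ)) * hA2

end KN

namespace KN

open MeasureTheory intervalIntegral

theorem deriv_integral {F : ℝ × ℝ → ℝ} (hF : ContDiff ℝ (⊤ : ℕ∞) F) (t₀ : ℝ) :
    HasDerivAt (fun t => ∫ σ in (0:ℝ)..1, F (t, σ))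
      (∫ σ in (0:ℝ)..1, fderiv ℝ F (t₀, σ) (1, 0)) t₀ := by
  have hFc : Continuous F := hF.continuous
  have hF'c : Continuous (fun q : ℝ × ℝ => fderiv ℝ F q (1, 0)) :=
    ((hF.fderiv_right (m := (⊤ : ℕ∞)) (by simp)).continuous).clm_apply continuous_const
  obtain ⟨C, hC⟩ := ((isCompact_Icc (a := t₀ - 1) (b := t₀ + 1)).prod
    (isCompact_Icc (a := (0:ℝ)) (b := 1))).exists_bound_of_continuousOn hF'c.continuousOn
  have key := intervalIntegral.hasDerivAt_integral_of_dominated_loc_of_deriv_le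
    (μ := volume) (F := fun t σ => F (t, σ)) (F' := fun t σ => fderiv ℝ F (t, σ) (1, 0))
    (bound := fun _ => C) (a := 0) (b := 1) (x₀ := t₀) (s := Metric.ball t₀ 1) (Metric.ball_mem_nhds t₀ one_pos)
    (Filter.Eventually.of_forall fun x =>
      (hFc.comp (continuous_const.prodMk continuous_id)).aestronglyMeasurable)
    ((hFc.comp (continuous_const.prodMk continuous_id)).intervalIntegrable 0 1)
    (hF'c.comp (continuous_const.prodMk continuous_id)).aestronglyMeasurable
    (Filter.Eventually.of_forall fun σ hσ x hx => by
      have hσ' : σ ∈ Set.Ioc (0:ℝ) 1 := by rwa [Set.uIoc_of_le (by norm_num : (0:ℝ) ≤ 1)] at hσ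
      have hx' : x ∈ Set.Icc (t₀ - 1) (t₀ + 1) := by
        rw [Metric.mem_ball, Real.dist_eq, abs_lt] at hx
        constructor <;> linarith [hx.1, hx.2]
      exact hC (x, σ) ⟨hx', ⟨hσ'.1.le, hσ'.2⟩⟩)
    (intervalIntegrable_const)
    (Filter.Eventually.of_forall fun σ hσ x hx =>
      comp_line (HasDerivAt.prodMk (hasDerivAt_id x) (hasDerivAt_const x σ)) rfl
        (hF.differentiable (by simp) _))
  exact key.2

end KN

/-- Kelvin–Noether circulation theorem for slice models:
under (G1)–(G3), the circulation ∮ (s v_S − v_T ∇θ_S)·dx around any loop advected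
by u_S is constant in time. -/
theorem kelvin_noether_circulation
    (uS vS : ℝ → ℝ × ℝ → ℝ × ℝ) (uT vT γS piS θS : ℝ → ℝ × ℝ → ℝ) (s : ℝ)
    (huS : SmoothV uS) (hvS : SmoothV vS) (huT : SmoothS uT) (hvT : SmoothS vT)
    (hγS : SmoothS γS) (hpi : SmoothS piS) (hθS : SmoothS θS)
    (hG1x : ∀ t p, pt (c1 vS) t p + adv uS (c1 vS) t p + gradT1 uS vS t p
        = px (piS t) p - vT t p * px (uT t) p - γS t p * px (θS t) p)
    (hG1z : ∀ t p, pt (c2 vS) t p + adv uS (c2 vS) t p + gradT2 uS vS t p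
        = pz (piS t) p - vT t p * pz (uT t) p - γS t p * pz (θS t) p)
    (hG2 : ∀ t p, pt vT t p + adv uS vT t p = -(s * γS t p))
    (hG3 : ∀ t p, pt θS t p + adv uS θS t p = -(s * uT t p))
    (c : ℝ → ℝ → ℝ × ℝ) (hc : AdvectedLoop uS c) :
    ∀ t₁ t₂ : ℝ,
      (∫ σ in (0:ℝ)..1,
        dot (s * (vS t₁ (c t₁ σ)).1 - vT t₁ (c t₁ σ) * px (θS t₁) (c t₁ σ),
             s * (vS t₁ (c t₁ σ)).2 - vT t₁ (c t₁ σ) * pz (θS t₁) (c t₁ σ))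
            (deriv (c t₁) σ))
      =
      (∫ σ in (0:ℝ)..1,
        dot (s * (vS t₂ (c t₂ σ)).1 - vT t₂ (c t₂ σ) * px (θS t₂) (c t₂ σ),
             s * (vS t₂ (c t₂ σ)).2 - vT t₂ (c t₂ σ) * pz (θS t₂) (c t₂ σ))
            (deriv (c t₂) σ)) := by
  intro t₁ t₂
  obtain ⟨hC, hclosed, hflow⟩ := hc
  have hC' : ContDiff ℝ (⊤ : ℕ∞) (KN.CC c) := hC
  have hCdiff : ∀ q, DifferentiableAt ℝ (KN.CC c) q := fun q => hC'.differentiable (by simp) q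
  have hEσ : ∀ t σ, HasDerivAt (fun σ' => c t σ') (KN.EE c (t, σ)) σ := fun t σ =>
    KN.comp_line (HasDerivAt.prodMk (hasDerivAt_const σ t) (hasDerivAt_id σ)) rfl (hCdiff _)
  have hFF := KN.smooth_FF (s := s) hvS hvT hθS hC'
  have hkey := KN.key_fderiv uS vS uT vT γS piS θS s huS hvS huT hvT hγS hpi hθS
    hG1x hG1z hG2 hG3 c hC' hflow
  have hcont : ∀ t₀ : ℝ, Continuous (fun σ => fderiv ℝ (KN.FF vS vT θS s c) (t₀, σ) (1, 0)) := by
    intro t₀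
    have h1 : Continuous (fun q : ℝ × ℝ => fderiv ℝ (KN.FF vS vT θS s c) q (1, 0)) :=
      ((hFF.fderiv_right (m := (⊤ : ℕ∞)) (by simp)).continuous).clm_apply continuous_const
    exact h1.comp (continuous_const.prodMk continuous_id)
  have hzero : ∀ t₀ : ℝ, (∫ σ in (0:ℝ)..1, fderiv ℝ (KN.FF vS vT θS s c) (t₀, σ) (1, 0)) = 0 := by
    intro t₀
    have hderivG : ∀ σ ∈ Set.uIcc (0:ℝ) 1, HasDerivAt (fun σ' => s * piS t₀ (c t₀ σ'))
        (fderiv ℝ (KN.FF vS vT θS s c) (t₀, σ) (1, 0)) σ := by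
      intro σ _
      rw [hkey t₀ σ]
      exact (KN.spatial hpi (hEσ t₀ σ)).const_mul s
    rw [intervalIntegral.integral_eq_sub_of_hasDerivAt hderivG
      ((hcont t₀).intervalIntegrable 0 1), ← hclosed t₀]
    ring
  have hΦ : ∀ t₀ : ℝ, HasDerivAt (fun t => ∫ σ in (0:ℝ)..1, KN.FF vS vT θS s c (t, σ)) 0 t₀ := by
    intro t₀
    have h := KN.deriv_integral hFF t₀
    rwa [hzero t₀] at h
  have hconst := is_const_of_deriv_eq_zero (𝕜 := ℝ)
    (f := fun t => ∫ σ in (0:ℝ)..1, KN.FF vS vT θS s c (t, σ))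
    (fun t => (hΦ t).differentiableAt) (fun t => (hΦ t).deriv) t₁ t₂
  have hrw : ∀ t : ℝ, (∫ σ in (0:ℝ)..1,
      dot (s * (vS t (c t σ)).1 - vT t (c t σ) * px (θS t) (c t σ),
           s * (vS t (c t σ)).2 - vT t (c t σ) * pz (θS t) (c t σ))
          (deriv (c t) σ))
      = ∫ σ in (0:ℝ)..1, KN.FF vS vT θS s c (t, σ) := by
    intro t
    apply intervalIntegral.integral_congr
    intro σ _
    dsimp only
    rw [show deriv (c t) σ = KN.EE c (t, σ) from (hEσ t σ).deriv]
    simp only [dot, KN.FF]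
    rw [KN.pxS_eq hθS, KN.pzS_eq hθS]
  rw [hrw t₁, hrw t₂]
  exact hconst
end
end

section
/- (Potential vorticity conservation for slice models.) Suppose the smooth fields u_S, v_S, u_T, v_T, γ_S, π, θ_S, D satisfy (G1) ∂_t v_S + (u_S·∇)v_S + (∇u_S)ᵀ v_S = ∇π − v_T ∇u_T − γ_S ∇θ_S, (G2) ∂_t v_T + u_S·∇v_T = −s γ_S, (G3) ∂_t θ_S + u_S·∇θ_S = −s u_T, and (G4) ∂_t D + ∇·(D u_S) = 0 with D > 0 everywhere, where s ∈ ℝ is a constant. Then the potential vorticity q := D⁻¹ [ s(∂_z v_S¹ − ∂_x v_S²) + ∂_z θ_S ∂_x v_T − ∂_x θ_S ∂_z v_T ] satisfies ∂_t q + u_S·∇ q = 0. -/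
noncomputable section

abbrev Pt := ℝ × ℝ × ℝ

def pd (v : Pt) (f : Pt → ℝ) (x : Pt) : ℝ := fderiv ℝ f x v

def evt : Pt := (1, 0, 0)
def evx : Pt := (0, 1, 0)
def evz : Pt := (0, 0, 1)

lemma contDiff_pd {f : Pt → ℝ} (hf : ContDiff ℝ (⊤ : ℕ∞) f) (v : Pt) :
    ContDiff ℝ (⊤ : ℕ∞) (pd v f) :=
  (hf.fderiv_right (m := (⊤ : ℕ∞)) (by exact_mod_cast le_top)).clm_apply contDiff_const

lemma dA {F : Type*} [NormedAddCommGroup F] [NormedSpace ℝ F] {f : Pt → F}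
    (hf : ContDiff ℝ (⊤ : ℕ∞) f) {x : Pt} : DifferentiableAt ℝ f x :=
  hf.differentiable (by simp) x

lemma pd_add {f g : Pt → ℝ} {x : Pt} (v : Pt) (hf : DifferentiableAt ℝ f x)
    (hg : DifferentiableAt ℝ g x) :
    pd v (fun y => f y + g y) x = pd v f x + pd v g x := by
  simp [pd, fderiv_fun_add hf hg]

lemma pd_mul {f g : Pt → ℝ} {x : Pt} (v : Pt) (hf : DifferentiableAt ℝ f x)
    (hg : DifferentiableAt ℝ g x) :
    pd v (fun y => f y * g y) x = pd v f x * g x + f x * pd v g x := by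
  simp [pd, fderiv_fun_mul hf hg]; ring

lemma pd_neg {f : Pt → ℝ} {x : Pt} (v : Pt) :
    pd v (fun y => -f y) x = -pd v f x := by
  simp [pd, fderiv_neg]

lemma pd_sub {f g : Pt → ℝ} {x : Pt} (v : Pt) (hf : DifferentiableAt ℝ f x)
    (hg : DifferentiableAt ℝ g x) :
    pd v (fun y => f y - g y) x = pd v f x - pd v g x := by
  simp [pd, fderiv_fun_sub hf hg]

lemma pd_const_mul {f : Pt → ℝ} {x : Pt} (v : Pt) (c : ℝ) (hf : DifferentiableAt ℝ f x) :
    pd v (fun y => c * f y) x = c * pd v f x := by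
  simp [pd, fderiv_const_mul hf c]

lemma pd_inv {f : Pt → ℝ} {x : Pt} (v : Pt) (hf : DifferentiableAt ℝ f x) (h0 : f x ≠ 0) :
    pd v (fun y => (f y)⁻¹) x = -((f x) ^ 2)⁻¹ * pd v f x := by
  have hc : (fun y => (f y)⁻¹) = Inv.inv ∘ f := rfl
  have hdi : DifferentiableAt ℝ Inv.inv (f x) := differentiableAt_inv h0
  simp only [pd]
  rw [hc, fderiv_comp x hdi hf, fderiv_inv]
  simp
  ring

lemma pd_comm {f : Pt → ℝ} (hf : ContDiff ℝ (⊤ : ℕ∞) f) (v w : Pt) (x : Pt) :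
    pd v (pd w f) x = pd w (pd v f) x := by
  have hdf : ∀ y, HasFDerivAt f (fderiv ℝ f y) y := fun y => (dA hf).hasFDerivAt
  have hff : DifferentiableAt ℝ (fderiv ℝ f) x :=
    dA (hf.fderiv_right (m := (⊤ : ℕ∞)) (by exact_mod_cast le_top))
  have hx : HasFDerivAt (fderiv ℝ f) (fderiv ℝ (fderiv ℝ f) x) x := hff.hasFDerivAt
  have hsym := second_derivative_symmetric hdf hx v w
  have expand : ∀ u₁ u₂ : Pt, pd u₁ (pd u₂ f) x = fderiv ℝ (fderiv ℝ f) x u₁ u₂ := by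
    intro u₁ u₂
    have : pd u₂ f = fun y => (fderiv ℝ f y) u₂ := rfl
    rw [pd, this, fderiv_clm_apply hff (differentiableAt_const u₂)]
    simp
  rw [expand v w, expand w v, hsym]

lemma pt_pd {F : Pt → ℝ} (hF : ContDiff ℝ (⊤ : ℕ∞) F) (t : ℝ) (p : ℝ × ℝ) :
    pt (fun a b => F (a, b)) t p = pd evt F (t, p) := by
  have hcurve : HasDerivAt (fun s : ℝ => ((s, p) : Pt)) ((1 : ℝ), ((0 : ℝ), (0 : ℝ))) t :=
    (hasDerivAt_id t).prodMk (hasDerivAt_const t p)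
  have h := ((dA hF (x := (t, p))).hasFDerivAt).comp_hasDerivAt t hcurve
  have h2 : HasDerivAt (fun s => F (s, p))
      (fderiv ℝ F (t, p) ((1 : ℝ), ((0 : ℝ), (0 : ℝ)))) t := h
  show deriv (fun s => F (s, p)) t = pd evt F (t, p)
  rw [h2.deriv]; rfl

lemma px_pd {F : Pt → ℝ} (hF : ContDiff ℝ (⊤ : ℕ∞) F) (t : ℝ) (p : ℝ × ℝ) :
    px (fun y => F (t, y)) p = pd evx F (t, p) := by
  have hcurve : HasDerivAt (fun a : ℝ => ((t, (a, p.2)) : Pt))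
      ((0 : ℝ), ((1 : ℝ), (0 : ℝ))) p.1 :=
    (hasDerivAt_const p.1 t).prodMk ((hasDerivAt_id p.1).prodMk (hasDerivAt_const p.1 p.2))
  have h := ((dA hF (x := (t, p))).hasFDerivAt).comp_hasDerivAt p.1 hcurve
  have h2 : HasDerivAt (fun a => F (t, (a, p.2)))
      (fderiv ℝ F (t, p) ((0 : ℝ), ((1 : ℝ), (0 : ℝ)))) p.1 := h
  show deriv (fun a => F (t, (a, p.2))) p.1 = pd evx F (t, p)
  rw [h2.deriv]; rfl

lemma pz_pd {F : Pt → ℝ} (hF : ContDiff ℝ (⊤ : ℕ∞) F) (t : ℝ) (p : ℝ × ℝ) :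
    pz (fun y => F (t, y)) p = pd evz F (t, p) := by
  have hcurve : HasDerivAt (fun a : ℝ => ((t, (p.1, a)) : Pt))
      ((0 : ℝ), ((0 : ℝ), (1 : ℝ))) p.2 :=
    (hasDerivAt_const p.2 t).prodMk ((hasDerivAt_const p.2 p.1).prodMk (hasDerivAt_id p.2))
  have h := ((dA hF (x := (t, p))).hasFDerivAt).comp_hasDerivAt p.2 hcurve
  have h2 : HasDerivAt (fun a => F (t, (p.1, a)))
      (fderiv ℝ F (t, p) ((0 : ℝ), ((0 : ℝ), (1 : ℝ)))) p.2 := h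
  show deriv (fun a => F (t, (p.1, a))) p.2 = pd evz F (t, p)
  rw [h2.deriv]; rfl

def L1 (g : ℝ → ℝ × ℝ → ℝ) : Pt → ℝ := fun x => g x.1 x.2
def LV1 (u : ℝ → ℝ × ℝ → ℝ × ℝ) : Pt → ℝ := fun x => (u x.1 x.2).1
def LV2 (u : ℝ → ℝ × ℝ → ℝ × ℝ) : Pt → ℝ := fun x => (u x.1 x.2).2

lemma sigma_deriv {V1 V2 TH T : Pt → ℝ} (hV1 : ContDiff ℝ (⊤ : ℕ∞) V1) (hV2 : ContDiff ℝ (⊤ : ℕ∞) V2)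
    (hTH : ContDiff ℝ (⊤ : ℕ∞) TH) (hT : ContDiff ℝ (⊤ : ℕ∞) T) (s : ℝ) (a x : Pt) :
    pd a (fun y => s * (pd evz V1 y - pd evx V2 y)
        + pd evz TH y * pd evx T y - pd evx TH y * pd evz T y) x
    = s * (pd a (pd evz V1) x - pd a (pd evx V2) x)
      + (pd a (pd evz TH) x * pd evx T x + pd evz TH x * pd a (pd evx T) x)
      - (pd a (pd evx TH) x * pd evz T x + pd evx TH x * pd a (pd evz T) x) := by
  have dz1 := contDiff_pd hV1 evz
  have dx2 := contDiff_pd hV2 evx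
  have dzTH := contDiff_pd hTH evz
  have dxTH := contDiff_pd hTH evx
  have dzT := contDiff_pd hT evz
  have dxT := contDiff_pd hT evx
  rw [pd_sub a (dA ((contDiff_const.mul (dz1.sub dx2)).add (dzTH.mul dxT)))
        (dA (dxTH.mul dzT)),
      pd_add a (dA (contDiff_const.mul (dz1.sub dx2))) (dA (dzTH.mul dxT)),
      pd_const_mul a s (dA (dz1.sub dx2)),
      pd_sub a (dA dz1) (dA dx2),
      pd_mul a (dA dzTH) (dA dxT), pd_mul a (dA dxTH) (dA dzT)]

lemma transport_deriv {f g U1 U2 : Pt → ℝ} (hf : ContDiff ℝ (⊤ : ℕ∞) f) (hg : ContDiff ℝ (⊤ : ℕ∞) g)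
    (hU1 : ContDiff ℝ (⊤ : ℕ∞) U1) (hU2 : ContDiff ℝ (⊤ : ℕ∞) U2) (s : ℝ)
    (h : ∀ x, pd evt f x + (U1 x * pd evx f x + U2 x * pd evz f x) = -(s * g x))
    (w : Pt) (x : Pt) :
    pd evt (pd w f) x + (U1 x * pd evx (pd w f) x + U2 x * pd evz (pd w f) x)
      = -(s * pd w g x) - pd w U1 x * pd evx f x - pd w U2 x * pd evz f x := by
  have dtf := contDiff_pd hf evt
  have dxf := contDiff_pd hf evx
  have dzf := contDiff_pd hf evz
  have H : pd w (fun y => pd evt f y + (U1 y * pd evx f y + U2 y * pd evz f y)) x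
      = pd w (fun y => -(s * g y)) x := by rw [funext h]
  rw [pd_add w (dA dtf) (dA ((hU1.mul dxf).add (hU2.mul dzf))),
      pd_add w (dA (hU1.mul dxf)) (dA (hU2.mul dzf)),
      pd_mul w (dA hU1) (dA dxf), pd_mul w (dA hU2) (dA dzf),
      pd_neg w, pd_const_mul w s (dA hg)] at H
  rw [pd_comm hf w evt, pd_comm hf w evx, pd_comm hf w evz] at H
  linarith [H]

lemma mom_deriv {f P T UT G TH U1 U2 V1 V2 : Pt → ℝ}
    (hf : ContDiff ℝ (⊤ : ℕ∞) f) (hP : ContDiff ℝ (⊤ : ℕ∞) P) (hT : ContDiff ℝ (⊤ : ℕ∞) T)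
    (hUT : ContDiff ℝ (⊤ : ℕ∞) UT) (hG : ContDiff ℝ (⊤ : ℕ∞) G) (hTH : ContDiff ℝ (⊤ : ℕ∞) TH)
    (hU1 : ContDiff ℝ (⊤ : ℕ∞) U1) (hU2 : ContDiff ℝ (⊤ : ℕ∞) U2)
    (hV1 : ContDiff ℝ (⊤ : ℕ∞) V1) (hV2 : ContDiff ℝ (⊤ : ℕ∞) V2) (w' : Pt)
    (h : ∀ x, pd evt f x + (U1 x * pd evx f x + U2 x * pd evz f x)
        + (V1 x * pd w' U1 x + V2 x * pd w' U2 x)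
        = pd w' P x - T x * pd w' UT x - G x * pd w' TH x)
    (w : Pt) (x : Pt) :
    pd evt (pd w f) x + (U1 x * pd evx (pd w f) x + U2 x * pd evz (pd w f) x)
      + pd w U1 x * pd evx f x + pd w U2 x * pd evz f x
      + pd w V1 x * pd w' U1 x + V1 x * pd w (pd w' U1) x
      + pd w V2 x * pd w' U2 x + V2 x * pd w (pd w' U2) x
      = pd w (pd w' P) x - (pd w T x * pd w' UT x + T x * pd w (pd w' UT) x)
        - (pd w G x * pd w' TH x + G x * pd w (pd w' TH) x) := by
  have dtf := contDiff_pd hf evt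
  have dxf := contDiff_pd hf evx
  have dzf := contDiff_pd hf evz
  have dU1 := contDiff_pd hU1 w'
  have dU2 := contDiff_pd hU2 w'
  have dP := contDiff_pd hP w'
  have dUT := contDiff_pd hUT w'
  have dTH := contDiff_pd hTH w'
  have H : pd w (fun y => pd evt f y + (U1 y * pd evx f y + U2 y * pd evz f y)
      + (V1 y * pd w' U1 y + V2 y * pd w' U2 y)) x
      = pd w (fun y => pd w' P y - T y * pd w' UT y - G y * pd w' TH y) x := by
    rw [funext h]
  rw [pd_add w (dA ((dtf.add ((hU1.mul dxf).add (hU2.mul dzf)))))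
        (dA ((hV1.mul dU1).add (hV2.mul dU2))),
      pd_add w (dA dtf) (dA ((hU1.mul dxf).add (hU2.mul dzf))),
      pd_add w (dA (hU1.mul dxf)) (dA (hU2.mul dzf)),
      pd_add w (dA (hV1.mul dU1)) (dA (hV2.mul dU2)),
      pd_mul w (dA hU1) (dA dxf), pd_mul w (dA hU2) (dA dzf),
      pd_mul w (dA hV1) (dA dU1), pd_mul w (dA hV2) (dA dU2),
      pd_sub w (dA (dP.sub (hT.mul dUT))) (dA (hG.mul dTH)),
      pd_sub w (dA dP) (dA (hT.mul dUT)),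
      pd_mul w (dA hT) (dA dUT), pd_mul w (dA hG) (dA dTH)] at H
  rw [pd_comm hf w evt, pd_comm hf w evx, pd_comm hf w evz] at H
  linarith [H]


lemma key {U1 U2 Va Vb T UT G TH P DE : Pt → ℝ} (s : ℝ)
    (hU1 : ContDiff ℝ (⊤ : ℕ∞) U1) (hU2 : ContDiff ℝ (⊤ : ℕ∞) U2)
    (hVa : ContDiff ℝ (⊤ : ℕ∞) Va) (hVb : ContDiff ℝ (⊤ : ℕ∞) Vb)
    (hT : ContDiff ℝ (⊤ : ℕ∞) T) (hUT : ContDiff ℝ (⊤ : ℕ∞) UT)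
    (hG : ContDiff ℝ (⊤ : ℕ∞) G) (hTH : ContDiff ℝ (⊤ : ℕ∞) TH)
    (hP : ContDiff ℝ (⊤ : ℕ∞) P) (hDE : ContDiff ℝ (⊤ : ℕ∞) DE)
    (hDne : ∀ y, DE y ≠ 0)
    (hA1 : ∀ x, pd evt Va x + (U1 x * pd evx Va x + U2 x * pd evz Va x)
        + (Va x * pd evx U1 x + Vb x * pd evx U2 x)
        = pd evx P x - T x * pd evx UT x - G x * pd evx TH x)
    (hA2 : ∀ x, pd evt Vb x + (U1 x * pd evx Vb x + U2 x * pd evz Vb x)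
        + (Va x * pd evz U1 x + Vb x * pd evz U2 x)
        = pd evz P x - T x * pd evz UT x - G x * pd evz TH x)
    (hB : ∀ x, pd evt T x + (U1 x * pd evx T x + U2 x * pd evz T x) = -(s * G x))
    (hC : ∀ x, pd evt TH x + (U1 x * pd evx TH x + U2 x * pd evz TH x) = -(s * UT x))
    (hD4 : ∀ x, pd evt DE x + (pd evx DE x * U1 x + DE x * pd evx U1 x)
        + (pd evz DE x * U2 x + DE x * pd evz U2 x) = 0)
    (x : Pt) :
    pd evt (fun y => (DE y)⁻¹ * (s * (pd evz Va y - pd evx Vb y)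
        + pd evz TH y * pd evx T y - pd evx TH y * pd evz T y)) x
    + (U1 x * pd evx (fun y => (DE y)⁻¹ * (s * (pd evz Va y - pd evx Vb y)
        + pd evz TH y * pd evx T y - pd evx TH y * pd evz T y)) x
      + U2 x * pd evz (fun y => (DE y)⁻¹ * (s * (pd evz Va y - pd evx Vb y)
        + pd evz TH y * pd evx T y - pd evx TH y * pd evz T y)) x) = 0 := by
  have hSig : ContDiff ℝ (⊤ : ℕ∞) (fun y => s * (pd evz Va y - pd evx Vb y)
      + pd evz TH y * pd evx T y - pd evx TH y * pd evz T y) :=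
    ((contDiff_const.mul ((contDiff_pd hVa evz).sub (contDiff_pd hVb evx))).add
      ((contDiff_pd hTH evz).mul (contDiff_pd hT evx))).sub
      ((contDiff_pd hTH evx).mul (contDiff_pd hT evz))
  have hDinv : ContDiff ℝ (⊤ : ℕ∞) (fun y => (DE y)⁻¹) := hDE.inv hDne
  have E1 := mom_deriv hVa hP hT hUT hG hTH hU1 hU2 hVa hVb evx hA1 evz x
  have E2 := mom_deriv hVb hP hT hUT hG hTH hU1 hU2 hVa hVb evz hA2 evx x
  have E3 := transport_deriv hT hG hU1 hU2 s hB evx x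
  have E4 := transport_deriv hT hG hU1 hU2 s hB evz x
  have E5 := transport_deriv hTH hUT hU1 hU2 s hC evx x
  have E6 := transport_deriv hTH hUT hU1 hU2 s hC evz x
  have E7 := hD4 x
  have CU1 := pd_comm hU1 evx evz x
  have CU2 := pd_comm hU2 evx evz x
  have CTH := pd_comm hTH evx evz x
  have CUT := pd_comm hUT evx evz x
  have CP := pd_comm hP evx evz x
  have hinv : DE x * (DE x)⁻¹ = 1 := mul_inv_cancel₀ (hDne x)
  have hW2 : ((DE x) ^ 2)⁻¹ = (DE x)⁻¹ * (DE x)⁻¹ := by rw [sq, mul_inv]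
  rw [pd_mul evt (dA hDinv) (dA hSig), pd_mul evx (dA hDinv) (dA hSig),
      pd_mul evz (dA hDinv) (dA hSig),
      pd_inv evt (dA hDE) (hDne x), pd_inv evx (dA hDE) (hDne x),
      pd_inv evz (dA hDE) (hDne x),
      sigma_deriv hVa hVb hTH hT s evt x, sigma_deriv hVa hVb hTH hT s evx x,
      sigma_deriv hVa hVb hTH hT s evz x, hW2]
  linear_combination
    (s * (DE x)⁻¹) * E1 - (s * (DE x)⁻¹) * E2
    + ((DE x)⁻¹ * pd evz TH x) * E3 - ((DE x)⁻¹ * pd evx TH x) * E4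
    - ((DE x)⁻¹ * pd evz T x) * E5 + ((DE x)⁻¹ * pd evx T x) * E6
    - ((DE x)⁻¹ * (DE x)⁻¹ * (s * (pd evz Va x - pd evx Vb x)
        + pd evz TH x * pd evx T x - pd evx TH x * pd evz T x)) * E7
    + ((s * (pd evz Va x - pd evx Vb x) + pd evz TH x * pd evx T x
        - pd evx TH x * pd evz T x) * (pd evx U1 x + pd evz U2 x) * (DE x)⁻¹) * hinv
    + (s * (DE x)⁻¹ * G x) * CTH + (s * (DE x)⁻¹ * T x) * CUT
    + (s * (DE x)⁻¹ * Va x) * CU1 + (s * (DE x)⁻¹ * Vb x) * CU2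
    - (s * (DE x)⁻¹) * CP


/-- Potential vorticity conservation for slice models:
under (G1)–(G4) with D > 0, the potential vorticity
q = D⁻¹ [ s(∂_z v_S¹ − ∂_x v_S²) + ∂_z θ_S ∂_x v_T − ∂_x θ_S ∂_z v_T ]
is advected: ∂ₜ q + u_S·∇q = 0. -/
theorem slice_potential_vorticity_conservation
    (uS vS : ℝ → ℝ × ℝ → ℝ × ℝ) (uT vT γS piS θS D : ℝ → ℝ × ℝ → ℝ) (s : ℝ)
    (huS : SmoothV uS) (hvS : SmoothV vS) (huT : SmoothS uT) (hvT : SmoothS vT)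
    (hγS : SmoothS γS) (hpi : SmoothS piS) (hθS : SmoothS θS) (hD : SmoothS D)
    (hDpos : ∀ t p, 0 < D t p)
    (hG1x : ∀ t p, pt (c1 vS) t p + adv uS (c1 vS) t p + gradT1 uS vS t p
        = px (piS t) p - vT t p * px (uT t) p - γS t p * px (θS t) p)
    (hG1z : ∀ t p, pt (c2 vS) t p + adv uS (c2 vS) t p + gradT2 uS vS t p
        = pz (piS t) p - vT t p * pz (uT t) p - γS t p * pz (θS t) p)
    (hG2 : ∀ t p, pt vT t p + adv uS vT t p = -(s * γS t p))
    (hG3 : ∀ t p, pt θS t p + adv uS θS t p = -(s * uT t p))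
    (hG4 : ∀ t p, pt D t p + px (fun q => D t q * (uS t q).1) p
        + pz (fun q => D t q * (uS t q).2) p = 0)
    (q : ℝ → ℝ × ℝ → ℝ)
    (hq : ∀ t p, q t p = (D t p)⁻¹ *
        (s * (pz (c1 vS t) p - px (c2 vS t) p)
          + pz (θS t) p * px (vT t) p - px (θS t) p * pz (vT t) p)) :
    ∀ t p, pt q t p + adv uS q t p = 0 := by
  have huS' : ContDiff ℝ (⊤ : ℕ∞) (fun x : Pt => uS x.1 x.2) := huS
  have hvS' : ContDiff ℝ (⊤ : ℕ∞) (fun x : Pt => vS x.1 x.2) := hvS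
  have hU1 : ContDiff ℝ (⊤ : ℕ∞) (LV1 uS) := contDiff_fst.comp huS'
  have hU2 : ContDiff ℝ (⊤ : ℕ∞) (LV2 uS) := contDiff_snd.comp huS'
  have hVa : ContDiff ℝ (⊤ : ℕ∞) (LV1 vS) := contDiff_fst.comp hvS'
  have hVb : ContDiff ℝ (⊤ : ℕ∞) (LV2 vS) := contDiff_snd.comp hvS'
  have hTT : ContDiff ℝ (⊤ : ℕ∞) (L1 vT) := hvT
  have hGG : ContDiff ℝ (⊤ : ℕ∞) (L1 γS) := hγS
  have hPP : ContDiff ℝ (⊤ : ℕ∞) (L1 piS) := hpi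
  have hTHs : ContDiff ℝ (⊤ : ℕ∞) (L1 θS) := hθS
  have hDD : ContDiff ℝ (⊤ : ℕ∞) (L1 D) := hD
  have hUTs : ContDiff ℝ (⊤ : ℕ∞) (L1 uT) := huT
  have hDne : ∀ y : Pt, L1 D y ≠ 0 := fun y => (hDpos y.1 y.2).ne'
  have hSig : ContDiff ℝ (⊤ : ℕ∞) (fun y => s * (pd evz (LV1 vS) y - pd evx (LV2 vS) y)
      + pd evz (L1 θS) y * pd evx (L1 vT) y - pd evx (L1 θS) y * pd evz (L1 vT) y) :=
    ((contDiff_const.mul ((contDiff_pd hVa evz).sub (contDiff_pd hVb evx))).add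
      ((contDiff_pd hTHs evz).mul (contDiff_pd hTT evx))).sub
      ((contDiff_pd hTHs evx).mul (contDiff_pd hTT evz))
  have hQE : ContDiff ℝ (⊤ : ℕ∞) (fun y => (L1 D y)⁻¹ * (s * (pd evz (LV1 vS) y - pd evx (LV2 vS) y)
      + pd evz (L1 θS) y * pd evx (L1 vT) y - pd evx (L1 θS) y * pd evz (L1 vT) y)) :=
    (hDD.inv hDne).mul hSig
  have hA1 : ∀ x : Pt, pd evt (LV1 vS) x
      + (LV1 uS x * pd evx (LV1 vS) x + LV2 uS x * pd evz (LV1 vS) x)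
      + (LV1 vS x * pd evx (LV1 uS) x + LV2 vS x * pd evx (LV2 uS) x)
      = pd evx (L1 piS) x - L1 vT x * pd evx (L1 uT) x - L1 γS x * pd evx (L1 θS) x := by
    rintro ⟨a, b⟩
    have h := hG1x a b
    simp only [adv, gradT1] at h
    rw [show pt (c1 vS) a b = pd evt (LV1 vS) (a, b) from pt_pd hVa a b,
        show px (c1 vS a) b = pd evx (LV1 vS) (a, b) from px_pd hVa a b,
        show pz (c1 vS a) b = pd evz (LV1 vS) (a, b) from pz_pd hVa a b,
        show px (c1 uS a) b = pd evx (LV1 uS) (a, b) from px_pd hU1 a b,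
        show px (c2 uS a) b = pd evx (LV2 uS) (a, b) from px_pd hU2 a b,
        show px (piS a) b = pd evx (L1 piS) (a, b) from px_pd hPP a b,
        show px (uT a) b = pd evx (L1 uT) (a, b) from px_pd hUTs a b,
        show px (θS a) b = pd evx (L1 θS) (a, b) from px_pd hTHs a b] at h
    exact h
  have hA2 : ∀ x : Pt, pd evt (LV2 vS) x
      + (LV1 uS x * pd evx (LV2 vS) x + LV2 uS x * pd evz (LV2 vS) x)
      + (LV1 vS x * pd evz (LV1 uS) x + LV2 vS x * pd evz (LV2 uS) x)
      = pd evz (L1 piS) x - L1 vT x * pd evz (L1 uT) x - L1 γS x * pd evz (L1 θS) x := by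
    rintro ⟨a, b⟩
    have h := hG1z a b
    simp only [adv, gradT2] at h
    rw [show pt (c2 vS) a b = pd evt (LV2 vS) (a, b) from pt_pd hVb a b,
        show px (c2 vS a) b = pd evx (LV2 vS) (a, b) from px_pd hVb a b,
        show pz (c2 vS a) b = pd evz (LV2 vS) (a, b) from pz_pd hVb a b,
        show pz (c1 uS a) b = pd evz (LV1 uS) (a, b) from pz_pd hU1 a b,
        show pz (c2 uS a) b = pd evz (LV2 uS) (a, b) from pz_pd hU2 a b,
        show pz (piS a) b = pd evz (L1 piS) (a, b) from pz_pd hPP a b,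
        show pz (uT a) b = pd evz (L1 uT) (a, b) from pz_pd hUTs a b,
        show pz (θS a) b = pd evz (L1 θS) (a, b) from pz_pd hTHs a b] at h
    exact h
  have hB : ∀ x : Pt, pd evt (L1 vT) x
      + (LV1 uS x * pd evx (L1 vT) x + LV2 uS x * pd evz (L1 vT) x) = -(s * L1 γS x) := by
    rintro ⟨a, b⟩
    have h := hG2 a b
    simp only [adv] at h
    rw [show pt vT a b = pd evt (L1 vT) (a, b) from pt_pd hTT a b,
        show px (vT a) b = pd evx (L1 vT) (a, b) from px_pd hTT a b,
        show pz (vT a) b = pd evz (L1 vT) (a, b) from pz_pd hTT a b] at h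
    exact h
  have hC : ∀ x : Pt, pd evt (L1 θS) x
      + (LV1 uS x * pd evx (L1 θS) x + LV2 uS x * pd evz (L1 θS) x) = -(s * L1 uT x) := by
    rintro ⟨a, b⟩
    have h := hG3 a b
    simp only [adv] at h
    rw [show pt θS a b = pd evt (L1 θS) (a, b) from pt_pd hTHs a b,
        show px (θS a) b = pd evx (L1 θS) (a, b) from px_pd hTHs a b,
        show pz (θS a) b = pd evz (L1 θS) (a, b) from pz_pd hTHs a b] at h
    exact h
  have hD4 : ∀ x : Pt, pd evt (L1 D) x
      + (pd evx (L1 D) x * LV1 uS x + L1 D x * pd evx (LV1 uS) x)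
      + (pd evz (L1 D) x * LV2 uS x + L1 D x * pd evz (LV2 uS) x) = 0 := by
    rintro ⟨a, b⟩
    have h := hG4 a b
    rw [show pt D a b = pd evt (L1 D) (a, b) from pt_pd hDD a b,
        show px (fun q => D a q * (uS a q).1) b
            = pd evx (fun y => L1 D y * LV1 uS y) (a, b) from px_pd (hDD.mul hU1) a b,
        show pz (fun q => D a q * (uS a q).2) b
            = pd evz (fun y => L1 D y * LV2 uS y) (a, b) from pz_pd (hDD.mul hU2) a b,
        pd_mul evx (dA hDD) (dA hU1), pd_mul evz (dA hDD) (dA hU2)] at h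
    exact h
  have hqfun : q = fun a b =>
      (fun y : Pt => (L1 D y)⁻¹ * (s * (pd evz (LV1 vS) y - pd evx (LV2 vS) y)
        + pd evz (L1 θS) y * pd evx (L1 vT) y
        - pd evx (L1 θS) y * pd evz (L1 vT) y)) (a, b) := by
    funext a b
    rw [hq a b,
        show pz (c1 vS a) b = pd evz (LV1 vS) (a, b) from pz_pd hVa a b,
        show px (c2 vS a) b = pd evx (LV2 vS) (a, b) from px_pd hVb a b,
        show pz (θS a) b = pd evz (L1 θS) (a, b) from pz_pd hTHs a b,
        show px (vT a) b = pd evx (L1 vT) (a, b) from px_pd hTT a b,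
        show px (θS a) b = pd evx (L1 θS) (a, b) from px_pd hTHs a b,
        show pz (vT a) b = pd evz (L1 vT) (a, b) from pz_pd hTT a b]
    rfl
  intro t p
  rw [hqfun]
  simp only [adv]
  rw [show pt (fun a b => (fun y : Pt => (L1 D y)⁻¹ * (s * (pd evz (LV1 vS) y
          - pd evx (LV2 vS) y) + pd evz (L1 θS) y * pd evx (L1 vT) y
          - pd evx (L1 θS) y * pd evz (L1 vT) y)) (a, b)) t p
        = pd evt (fun y : Pt => (L1 D y)⁻¹ * (s * (pd evz (LV1 vS) y - pd evx (LV2 vS) y)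
          + pd evz (L1 θS) y * pd evx (L1 vT) y
          - pd evx (L1 θS) y * pd evz (L1 vT) y)) (t, p) from pt_pd hQE t p,
      show px (fun y => (fun y' : Pt => (L1 D y')⁻¹ * (s * (pd evz (LV1 vS) y'
          - pd evx (LV2 vS) y') + pd evz (L1 θS) y' * pd evx (L1 vT) y'
          - pd evx (L1 θS) y' * pd evz (L1 vT) y')) (t, y)) p
        = pd evx (fun y : Pt => (L1 D y)⁻¹ * (s * (pd evz (LV1 vS) y - pd evx (LV2 vS) y)
          + pd evz (L1 θS) y * pd evx (L1 vT) y
          - pd evx (L1 θS) y * pd evz (L1 vT) y)) (t, p) from px_pd hQE t p,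
      show pz (fun y => (fun y' : Pt => (L1 D y')⁻¹ * (s * (pd evz (LV1 vS) y'
          - pd evx (LV2 vS) y') + pd evz (L1 θS) y' * pd evx (L1 vT) y'
          - pd evx (L1 θS) y' * pd evz (L1 vT) y')) (t, y)) p
        = pd evz (fun y : Pt => (L1 D y)⁻¹ * (s * (pd evz (LV1 vS) y - pd evx (LV2 vS) y)
          + pd evz (L1 θS) y * pd evx (L1 vT) y
          - pd evx (L1 θS) y * pd evz (L1 vT) y)) (t, p) from pz_pd hQE t p]
  exact key s hU1 hU2 hVa hVb hTT hUTs hGG hTHs hPP hDD hDne hA1 hA2 hB hC hD4 (t, p)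
end
end

section
/- (Kelvin circulation conservation for the Euler–Boussinesq Eady model.) Suppose the smooth fields u_S = (u,w), u_T, θ_S, p satisfy the Eady–Boussinesq slice system (E1)–(E4). Then for every loop c advected by u_S, the circulation I(t) := ∫₀¹ [ s u_S − (u_T + f x)∇θ_S ](t, c(t,σ)) · ∂_σ c(t,σ) dσ is constant in t. -/
set_option linter.unusedSectionVars false
set_option linter.unusedVariables false
set_option maxHeartbeats 1000000
open ContDiff MeasureTheory intervalIntegral


noncomputable section

namespace EadyAux

def Sm (f : ℝ → ℝ × ℝ → ℝ) : Prop := ContDiff ℝ ∞ (fun q : ℝ × (ℝ × ℝ) => f q.1 q.2)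

/-- The transported one-form V = s u_S - (u_T + f x) ∇θ_S, first component. -/
def VV1 (uS : ℝ → ℝ×ℝ → ℝ×ℝ) (uT θS : ℝ → ℝ×ℝ → ℝ) (f s : ℝ) : ℝ → ℝ×ℝ → ℝ :=
  fun t p => s * (uS t p).1 - (uT t p + f * p.1) * px (θS t) p

def VV2 (uS : ℝ → ℝ×ℝ → ℝ×ℝ) (uT θS : ℝ → ℝ×ℝ → ℝ) (f s : ℝ) : ℝ → ℝ×ℝ → ℝ :=
  fun t p => s * (uS t p).2 - (uT t p + f * p.1) * pz (θS t) p

/-- The Bernoulli-type potential. -/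
def PhiF (uS : ℝ → ℝ×ℝ → ℝ×ℝ) (uT θS P : ℝ → ℝ×ℝ → ℝ) (f g θ₀ H s : ℝ) : ℝ → ℝ×ℝ → ℝ :=
  fun t p => s * (-(P t p) + g / θ₀ * (p.2 - H/2) * θS t p + uT t p * uT t p / 2
      + f * (p.1 * uT t p) + ((uS t p).1 * (uS t p).1 + (uS t p).2 * (uS t p).2) / 2)

/-- sigma-derivative of the loop -/
def csig (c : ℝ → ℝ → ℝ×ℝ) : ℝ → ℝ → ℝ×ℝ :=
  fun t σ => fderiv ℝ (fun q : ℝ×ℝ => c q.1 q.2) (t, σ) ((0:ℝ), (1:ℝ))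

lemma h1inf : (∞ : WithTop ℕ∞) ≠ 0 := by simp
lemma hsinf : ∞ + 1 ≤ (∞ : WithTop ℕ∞) := by exact_mod_cast le_top

variable {E F : Type*} [NormedAddCommGroup E] [NormedSpace ℝ E]
  [NormedAddCommGroup F] [NormedSpace ℝ F]

lemma fderiv_swap {g : E → F} (hg : ContDiff ℝ ∞ g) (x v w : E) :
    fderiv ℝ (fun y => fderiv ℝ g y w) x v = fderiv ℝ (fun y => fderiv ℝ g y v) x w := by
  have hdf : DifferentiableAt ℝ (fderiv ℝ g) x :=
    ((hg.fderiv_right hsinf).differentiable h1inf) x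
  have h1 : ∀ u : E, fderiv ℝ (fun y => fderiv ℝ g y u) x = (fderiv ℝ (fderiv ℝ g) x).flip u := by
    intro u
    rw [fderiv_clm_apply hdf (differentiableAt_const u)]; simp
  rw [h1 w, h1 v]
  exact second_derivative_symmetric (fun y => ((hg.differentiable h1inf) y).hasFDerivAt)
    hdf.hasFDerivAt v w

/-- generic slice lemmas for fields on ℝ × (ℝ×ℝ) -/
lemma sliceX {f : ℝ → ℝ × ℝ → ℝ} (hf : Sm f) (t : ℝ) (p : ℝ × ℝ) :
    HasDerivAt (fun x => f t (x, p.2)) (px (f t) p) p.1 := by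
  have hd : DifferentiableAt ℝ (fun x : ℝ => f t (x, p.2)) p.1 := by
    have hl : DifferentiableAt ℝ (fun x : ℝ => ((t, (x, p.2)) : ℝ × (ℝ × ℝ))) p.1 :=
      (differentiableAt_const t).prodMk (differentiableAt_id.prodMk (differentiableAt_const p.2))
    exact ((hf.differentiable h1inf) (t, (p.1, p.2))).comp (g := fun q : ℝ × (ℝ × ℝ) => f q.1 q.2) p.1 hl
  exact hd.hasDerivAt

lemma sliceZ {f : ℝ → ℝ × ℝ → ℝ} (hf : Sm f) (t : ℝ) (p : ℝ × ℝ) :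
    HasDerivAt (fun z => f t (p.1, z)) (pz (f t) p) p.2 := by
  have hd : DifferentiableAt ℝ (fun z : ℝ => f t (p.1, z)) p.2 := by
    have hl : DifferentiableAt ℝ (fun z : ℝ => ((t, (p.1, z)) : ℝ × (ℝ × ℝ))) p.2 :=
      (differentiableAt_const t).prodMk ((differentiableAt_const p.1).prodMk differentiableAt_id)
    exact ((hf.differentiable h1inf) (t, (p.1, p.2))).comp (g := fun q : ℝ × (ℝ × ℝ) => f q.1 q.2) p.2 hl
  exact hd.hasDerivAt

lemma sliceT {f : ℝ → ℝ × ℝ → ℝ} (hf : Sm f) (t : ℝ) (p : ℝ × ℝ) :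
    HasDerivAt (fun τ => f τ p) (pt f t p) t := by
  have hd : DifferentiableAt ℝ (fun τ : ℝ => f τ p) t := by
    have hl : DifferentiableAt ℝ (fun τ : ℝ => ((τ, p) : ℝ × (ℝ × ℝ))) t :=
      differentiableAt_id.prodMk (differentiableAt_const p)
    exact ((hf.differentiable h1inf) (t, p)).comp t hl
  exact hd.hasDerivAt

lemma px_eq {f : ℝ → ℝ × ℝ → ℝ} (hf : Sm f) (t : ℝ) (p : ℝ × ℝ) :
    px (f t) p = fderiv ℝ (fun q : ℝ × (ℝ × ℝ) => f q.1 q.2) (t, p) (0, (1, 0)) := by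
  have hl : HasDerivAt (fun x : ℝ => ((t, (x, p.2)) : ℝ × (ℝ × ℝ))) (0, (1, 0)) p.1 :=
    (hasDerivAt_const p.1 t).prodMk ((hasDerivAt_id p.1).prodMk (hasDerivAt_const p.1 p.2))
  have h := (((hf.differentiable h1inf) (t, (p.1, p.2))).hasFDerivAt).comp_hasDerivAt p.1 hl
  have h2 := h.deriv
  simp only [Function.comp_def] at h2
  rw [px]
  rw [← h2]

lemma pz_eq {f : ℝ → ℝ × ℝ → ℝ} (hf : Sm f) (t : ℝ) (p : ℝ × ℝ) :
    pz (f t) p = fderiv ℝ (fun q : ℝ × (ℝ × ℝ) => f q.1 q.2) (t, p) (0, (0, 1)) := by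
  have hl : HasDerivAt (fun z : ℝ => ((t, (p.1, z)) : ℝ × (ℝ × ℝ))) (0, (0, 1)) p.2 :=
    (hasDerivAt_const p.2 t).prodMk ((hasDerivAt_const p.2 p.1).prodMk (hasDerivAt_id p.2))
  have h := (((hf.differentiable h1inf) (t, (p.1, p.2))).hasFDerivAt).comp_hasDerivAt p.2 hl
  have h2 := h.deriv
  simp only [Function.comp_def] at h2
  rw [pz]
  rw [← h2]

lemma pt_eq {f : ℝ → ℝ × ℝ → ℝ} (hf : Sm f) (t : ℝ) (p : ℝ × ℝ) :
    pt f t p = fderiv ℝ (fun q : ℝ × (ℝ × ℝ) => f q.1 q.2) (t, p) (1, (0, 0)) := by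
  have hl : HasDerivAt (fun τ : ℝ => ((τ, p) : ℝ × (ℝ × ℝ))) (1, (0, 0)) t :=
    (hasDerivAt_id t).prodMk (hasDerivAt_const t p)
  have h := (((hf.differentiable h1inf) (t, p)).hasFDerivAt).comp_hasDerivAt t hl
  have h2 := h.deriv
  simp only [Function.comp_def] at h2
  rw [pt]
  rw [← h2]

/-- the chain rule workhorse -/
lemma chainS {f : ℝ → ℝ × ℝ → ℝ} (hf : Sm f) {γ : ℝ → ℝ} {ρ : ℝ → ℝ × ℝ} {a : ℝ}
    {v : ℝ × ℝ} {τ : ℝ} (hγ : HasDerivAt γ a τ) (hρ : HasDerivAt ρ v τ) :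
    HasDerivAt (fun r => f (γ r) (ρ r))
      (a * pt f (γ τ) (ρ τ) + v.1 * px (f (γ τ)) (ρ τ) + v.2 * pz (f (γ τ)) (ρ τ)) τ := by
  have hcurve : HasDerivAt (fun r => ((γ r, ρ r) : ℝ × (ℝ × ℝ))) (a, v) τ := hγ.prodMk hρ
  have h := (((hf.differentiable h1inf) (γ τ, ρ τ)).hasFDerivAt).comp_hasDerivAt τ hcurve
  refine HasDerivAt.congr_deriv h (Eq.symm ?_)
  have hsplit : ((a, v) : ℝ × (ℝ × ℝ)) =
      a • ((1:ℝ), ((0:ℝ), (0:ℝ))) + v.1 • ((0:ℝ), ((1:ℝ), (0:ℝ)))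
        + v.2 • ((0:ℝ), ((0:ℝ), (1:ℝ))) := by simp [Prod.ext_iff]
  rw [pt_eq hf, px_eq hf, pz_eq hf, hsplit, map_add, map_add, _root_.map_smul, _root_.map_smul, _root_.map_smul]
  simp [smul_eq_mul]

lemma sm_px {f : ℝ → ℝ × ℝ → ℝ} (hf : Sm f) : Sm (fun t p => px (f t) p) := by
  have h : (fun q : ℝ × (ℝ × ℝ) => px (f q.1) q.2)
      = fun q => fderiv ℝ (fun q' : ℝ × (ℝ × ℝ) => f q'.1 q'.2) q (0, (1, 0)) :=
    funext fun q => px_eq hf q.1 q.2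
  show ContDiff ℝ ∞ (fun q : ℝ × (ℝ × ℝ) => px (f q.1) q.2)
  rw [h]
  exact (hf.fderiv_right hsinf).clm_apply contDiff_const

lemma sm_pz {f : ℝ → ℝ × ℝ → ℝ} (hf : Sm f) : Sm (fun t p => pz (f t) p) := by
  have h : (fun q : ℝ × (ℝ × ℝ) => pz (f q.1) q.2)
      = fun q => fderiv ℝ (fun q' : ℝ × (ℝ × ℝ) => f q'.1 q'.2) q (0, (0, 1)) :=
    funext fun q => pz_eq hf q.1 q.2
  show ContDiff ℝ ∞ (fun q : ℝ × (ℝ × ℝ) => pz (f q.1) q.2)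
  rw [h]
  exact (hf.fderiv_right hsinf).clm_apply contDiff_const

lemma sm_pt {f : ℝ → ℝ × ℝ → ℝ} (hf : Sm f) : Sm (pt f) := by
  have h : (fun q : ℝ × (ℝ × ℝ) => pt f q.1 q.2)
      = fun q => fderiv ℝ (fun q' : ℝ × (ℝ × ℝ) => f q'.1 q'.2) q (1, (0, 0)) :=
    funext fun q => pt_eq hf q.1 q.2
  show ContDiff ℝ ∞ (fun q : ℝ × (ℝ × ℝ) => pt f q.1 q.2)
  rw [h]
  exact (hf.fderiv_right hsinf).clm_apply contDiff_const

/-- mixed partial symmetry: t and x -/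
lemma pt_px_comm {f : ℝ → ℝ × ℝ → ℝ} (hf : Sm f) (t : ℝ) (p : ℝ × ℝ) :
    pt (fun τ q => px (f τ) q) t p = px (pt f t) p := by
  rw [pt_eq (sm_px hf), px_eq (sm_pt hf)]
  have e1 : (fun q : ℝ × (ℝ × ℝ) => px (f q.1) q.2)
      = fun q => fderiv ℝ (fun q' : ℝ × (ℝ × ℝ) => f q'.1 q'.2) q (0, (1, 0)) :=
    funext fun q => px_eq hf q.1 q.2
  have e2 : (fun q : ℝ × (ℝ × ℝ) => pt f q.1 q.2)
      = fun q => fderiv ℝ (fun q' : ℝ × (ℝ × ℝ) => f q'.1 q'.2) q (1, (0, 0)) :=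
    funext fun q => pt_eq hf q.1 q.2
  rw [e1, e2]
  exact fderiv_swap hf (t, p) _ _

lemma pt_pz_comm {f : ℝ → ℝ × ℝ → ℝ} (hf : Sm f) (t : ℝ) (p : ℝ × ℝ) :
    pt (fun τ q => pz (f τ) q) t p = pz (pt f t) p := by
  rw [pt_eq (sm_pz hf), pz_eq (sm_pt hf)]
  have e1 : (fun q : ℝ × (ℝ × ℝ) => pz (f q.1) q.2)
      = fun q => fderiv ℝ (fun q' : ℝ × (ℝ × ℝ) => f q'.1 q'.2) q (0, (0, 1)) :=
    funext fun q => pz_eq hf q.1 q.2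
  have e2 : (fun q : ℝ × (ℝ × ℝ) => pt f q.1 q.2)
      = fun q => fderiv ℝ (fun q' : ℝ × (ℝ × ℝ) => f q'.1 q'.2) q (1, (0, 0)) :=
    funext fun q => pt_eq hf q.1 q.2
  rw [e1, e2]
  exact fderiv_swap hf (t, p) _ _

lemma px_pz_comm {f : ℝ → ℝ × ℝ → ℝ} (hf : Sm f) (t : ℝ) (p : ℝ × ℝ) :
    px ((fun τ q => pz (f τ) q) t) p = pz ((fun τ q => px (f τ) q) t) p := by
  rw [px_eq (sm_pz hf), pz_eq (sm_px hf)]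
  have e1 : (fun q : ℝ × (ℝ × ℝ) => pz (f q.1) q.2)
      = fun q => fderiv ℝ (fun q' : ℝ × (ℝ × ℝ) => f q'.1 q'.2) q (0, (0, 1)) :=
    funext fun q => pz_eq hf q.1 q.2
  have e2 : (fun q : ℝ × (ℝ × ℝ) => px (f q.1) q.2)
      = fun q => fderiv ℝ (fun q' : ℝ × (ℝ × ℝ) => f q'.1 q'.2) q (0, (1, 0)) :=
    funext fun q => px_eq hf q.1 q.2
  rw [e1, e2]
  exact fderiv_swap hf (t, p) _ _

/-- interval Fubini for globally continuous functions -/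
lemma interval_swap_core {f : ℝ → ℝ → ℝ} (hf : Continuous fun q : ℝ × ℝ => f q.1 q.2)
    {a b c d : ℝ} (hab : a ≤ b) (hcd : c ≤ d) :
    (∫ x in a..b, ∫ y in c..d, f x y) = ∫ y in c..d, ∫ x in a..b, f x y := by
  have hint : IntegrableOn (fun q : ℝ × ℝ => f q.1 q.2) (Set.Ioc a b ×ˢ Set.Ioc c d) volume := by
    apply (hf.continuousOn.integrableOn_compact (isCompact_Icc.prod isCompact_Icc)).mono_set
    exact Set.prod_mono Set.Ioc_subset_Icc_self Set.Ioc_subset_Icc_self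
  have h2 : Integrable (Function.uncurry f)
      ((volume.restrict (Set.Ioc a b)).prod (volume.restrict (Set.Ioc c d))) := by
    rw [Measure.prod_restrict]
    rw [← Measure.volume_eq_prod] at *
    exact hint
  have := MeasureTheory.integral_integral_swap h2
  simp only [intervalIntegral.integral_of_le hab, intervalIntegral.integral_of_le hcd]
  exact this

lemma interval_swap {f : ℝ → ℝ → ℝ} (hf : Continuous fun q : ℝ × ℝ => f q.1 q.2)
    (a b c d : ℝ) :
    (∫ x in a..b, ∫ y in c..d, f x y) = ∫ y in c..d, ∫ x in a..b, f x y := by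
  rcases le_total a b with hab | hab <;> rcases le_total c d with hcd | hcd
  · exact interval_swap_core hf hab hcd
  · have h := interval_swap_core hf hab hcd
    calc (∫ x in a..b, ∫ y in c..d, f x y)
        = ∫ x in a..b, -∫ y in d..c, f x y := by
          simp_rw [intervalIntegral.integral_symm d c]
      _ = -∫ x in a..b, ∫ y in d..c, f x y := intervalIntegral.integral_neg
      _ = -∫ y in d..c, ∫ x in a..b, f x y := by rw [h]
      _ = ∫ y in c..d, ∫ x in a..b, f x y := (intervalIntegral.integral_symm d c).symm
  · have h := interval_swap_core hf hab hcd
    calc (∫ x in a..b, ∫ y in c..d, f x y)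
        = -∫ x in b..a, ∫ y in c..d, f x y := intervalIntegral.integral_symm b a
      _ = -∫ y in c..d, ∫ x in b..a, f x y := by rw [h]
      _ = ∫ y in c..d, -∫ x in b..a, f x y := intervalIntegral.integral_neg.symm
      _ = ∫ y in c..d, ∫ x in a..b, f x y := by
          simp_rw [intervalIntegral.integral_symm b a]
  · have h := interval_swap_core hf hab hcd
    calc (∫ x in a..b, ∫ y in c..d, f x y)
        = -∫ x in b..a, ∫ y in c..d, f x y := intervalIntegral.integral_symm b a
      _ = -∫ x in b..a, -∫ y in d..c, f x y := by
          simp_rw [intervalIntegral.integral_symm d c]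
      _ = ∫ x in b..a, ∫ y in d..c, f x y := by rw [intervalIntegral.integral_neg]; ring
      _ = ∫ y in d..c, ∫ x in b..a, f x y := h
      _ = ∫ y in d..c, -∫ x in a..b, f x y := by
          simp_rw [intervalIntegral.integral_symm a b]
      _ = -∫ y in d..c, ∫ x in a..b, f x y := intervalIntegral.integral_neg
      _ = ∫ y in c..d, ∫ x in a..b, f x y := (intervalIntegral.integral_symm d c).symm





section Fields
variable {uS : ℝ → ℝ×ℝ → ℝ×ℝ} {uT θS P : ℝ → ℝ×ℝ → ℝ} {f g θ₀ H s : ℝ}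

lemma sm_VV1 (smu1 : Sm (c1 uS)) (smuT : Sm uT) (smθ : Sm θS) :
    Sm (VV1 uS uT θS f s) := by
  show ContDiff ℝ ∞ (fun q : ℝ × (ℝ×ℝ) => VV1 uS uT θS f s q.1 q.2)
  simp only [VV1]
  exact (contDiff_const.mul smu1).sub
    ((smuT.add (contDiff_const.mul (contDiff_fst.comp contDiff_snd))).mul (sm_px smθ))

lemma sm_VV2 (smu2 : Sm (c2 uS)) (smuT : Sm uT) (smθ : Sm θS) :
    Sm (VV2 uS uT θS f s) := by
  show ContDiff ℝ ∞ (fun q : ℝ × (ℝ×ℝ) => VV2 uS uT θS f s q.1 q.2)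
  simp only [VV2]
  exact (contDiff_const.mul smu2).sub
    ((smuT.add (contDiff_const.mul (contDiff_fst.comp contDiff_snd))).mul (sm_pz smθ))

lemma sm_PhiF (smu1 : Sm (c1 uS)) (smu2 : Sm (c2 uS)) (smuT : Sm uT) (smθ : Sm θS)
    (smP : Sm P) : Sm (PhiF uS uT θS P f g θ₀ H s) := by
  show ContDiff ℝ ∞ (fun q : ℝ × (ℝ×ℝ) => PhiF uS uT θS P f g θ₀ H s q.1 q.2)
  simp only [PhiF]
  exact contDiff_const.mul
    (((((smP.neg).add ((contDiff_const.mul ((contDiff_snd.comp contDiff_snd).sub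
        contDiff_const)).mul smθ)).add ((smuT.mul smuT).div_const 2)).add
      (contDiff_const.mul ((contDiff_fst.comp contDiff_snd).mul smuT))).add
      (((smu1.mul smu1).add (smu2.mul smu2)).div_const 2))

variable (smu1 : Sm (c1 uS)) (smu2 : Sm (c2 uS)) (smuT : Sm uT) (smθ : Sm θS) (smP : Sm P)

include smu1 smu2 smuT smθ smP in
lemma exp_pxV1 (t : ℝ) (p : ℝ×ℝ) :
    px (VV1 uS uT θS f s t) p
      = s * px (c1 uS t) p - ((px (uT t) p + f * 1) * px (θS t) p
          + (uT t p + f * p.1) * px (fun q => px (θS t) q) p) :=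
  (((sliceX smu1 t p).const_mul s).sub
    (((sliceX smuT t p).add ((hasDerivAt_id p.1).const_mul f)).mul
      (sliceX (sm_px smθ) t p))).deriv

include smu1 smu2 smuT smθ smP in
lemma exp_pzV1 (t : ℝ) (p : ℝ×ℝ) :
    px (VV2 uS uT θS f s t) p
      = s * px (c2 uS t) p - ((px (uT t) p + f * 1) * pz (θS t) p
          + (uT t p + f * p.1) * px (fun q => pz (θS t) q) p) :=
  (((sliceX smu2 t p).const_mul s).sub
    (((sliceX smuT t p).add ((hasDerivAt_id p.1).const_mul f)).mul
      (sliceX (sm_pz smθ) t p))).deriv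

include smu1 smu2 smuT smθ smP in
lemma exp_pzV1' (t : ℝ) (p : ℝ×ℝ) :
    pz (VV1 uS uT θS f s t) p
      = s * pz (c1 uS t) p - ((pz (uT t) p + 0) * px (θS t) p
          + (uT t p + f * p.1) * pz (fun q => px (θS t) q) p) :=
  (((sliceZ smu1 t p).const_mul s).sub
    (((sliceZ smuT t p).add (hasDerivAt_const p.2 (f * p.1))).mul
      (sliceZ (sm_px smθ) t p))).deriv

include smu1 smu2 smuT smθ smP in
lemma exp_pzV2 (t : ℝ) (p : ℝ×ℝ) :
    pz (VV2 uS uT θS f s t) p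
      = s * pz (c2 uS t) p - ((pz (uT t) p + 0) * pz (θS t) p
          + (uT t p + f * p.1) * pz (fun q => pz (θS t) q) p) :=
  (((sliceZ smu2 t p).const_mul s).sub
    (((sliceZ smuT t p).add (hasDerivAt_const p.2 (f * p.1))).mul
      (sliceZ (sm_pz smθ) t p))).deriv

include smu1 smu2 smuT smθ smP in
lemma exp_ptV1 (t : ℝ) (p : ℝ×ℝ) :
    pt (VV1 uS uT θS f s) t p
      = s * pt (c1 uS) t p - ((pt uT t p + 0) * px (θS t) p
          + (uT t p + f * p.1) * pt (fun τ q => px (θS τ) q) t p) :=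
  (((sliceT smu1 t p).const_mul s).sub
    (((sliceT smuT t p).add (hasDerivAt_const t (f * p.1))).mul
      (sliceT (sm_px smθ) t p))).deriv

include smu1 smu2 smuT smθ smP in
lemma exp_ptV2 (t : ℝ) (p : ℝ×ℝ) :
    pt (VV2 uS uT θS f s) t p
      = s * pt (c2 uS) t p - ((pt uT t p + 0) * pz (θS t) p
          + (uT t p + f * p.1) * pt (fun τ q => pz (θS τ) q) t p) :=
  (((sliceT smu2 t p).const_mul s).sub
    (((sliceT smuT t p).add (hasDerivAt_const t (f * p.1))).mul
      (sliceT (sm_pz smθ) t p))).deriv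

include smu1 smu2 smuT smθ smP in
lemma exp_pxPhi (t : ℝ) (p : ℝ×ℝ) :
    px (PhiF uS uT θS P f g θ₀ H s t) p
      = s * ((((-(px (P t) p) + g / θ₀ * (p.2 - H/2) * px (θS t) p)
          + (px (uT t) p * uT t p + uT t p * px (uT t) p) / 2)
          + f * (1 * uT t p + p.1 * px (uT t) p))
          + (px (c1 uS t) p * c1 uS t p + c1 uS t p * px (c1 uS t) p
             + (px (c2 uS t) p * c2 uS t p + c2 uS t p * px (c2 uS t) p)) / 2) :=
  (((((sliceX smP t p).neg.add ((sliceX smθ t p).const_mul (g / θ₀ * (p.2 - H/2)))).add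
      (((sliceX smuT t p).mul (sliceX smuT t p)).div_const 2)).add
      (((hasDerivAt_id p.1).mul (sliceX smuT t p)).const_mul f)).add
      ((((sliceX smu1 t p).mul (sliceX smu1 t p)).add
        ((sliceX smu2 t p).mul (sliceX smu2 t p))).div_const 2)).const_mul s |>.deriv

include smu1 smu2 smuT smθ smP in
lemma exp_pzPhi (t : ℝ) (p : ℝ×ℝ) :
    pz (PhiF uS uT θS P f g θ₀ H s t) p
      = s * ((((-(pz (P t) p) + (g / θ₀ * (1 - 0) * θS t p
            + g / θ₀ * (p.2 - H/2) * pz (θS t) p))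
          + (pz (uT t) p * uT t p + uT t p * pz (uT t) p) / 2)
          + f * (p.1 * pz (uT t) p))
          + (pz (c1 uS t) p * c1 uS t p + c1 uS t p * pz (c1 uS t) p
             + (pz (c2 uS t) p * c2 uS t p + c2 uS t p * pz (c2 uS t) p)) / 2) :=
  (((((sliceZ smP t p).neg.add
      ((((hasDerivAt_id p.2).sub (hasDerivAt_const p.2 (H/2))).const_mul (g / θ₀)).mul
        (sliceZ smθ t p))).add
      (((sliceZ smuT t p).mul (sliceZ smuT t p)).div_const 2)).add
      (((sliceZ smuT t p).const_mul p.1).const_mul f)).add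
      ((((sliceZ smu1 t p).mul (sliceZ smu1 t p)).add
        ((sliceZ smu2 t p).mul (sliceZ smu2 t p))).div_const 2)).const_mul s |>.deriv

include smu1 smu2 smuT smθ smP in
lemma exp_px_ptθ (t : ℝ) (p : ℝ×ℝ) :
    px (fun q => -((uS t q).1 * px (θS t) q + (uS t q).2 * pz (θS t) q + s * uT t q)) p
      = -((px (c1 uS t) p * px (θS t) p + c1 uS t p * px (fun q => px (θS t) q) p
          + (px (c2 uS t) p * pz (θS t) p + c2 uS t p * px (fun q => pz (θS t) q) p))
          + s * px (uT t) p) :=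
  ((((sliceX smu1 t p).mul (sliceX (sm_px smθ) t p)).add
     ((sliceX smu2 t p).mul (sliceX (sm_pz smθ) t p))).add
     ((sliceX smuT t p).const_mul s)).neg.deriv

include smu1 smu2 smuT smθ smP in
lemma exp_pz_ptθ (t : ℝ) (p : ℝ×ℝ) :
    pz (fun q => -((uS t q).1 * px (θS t) q + (uS t q).2 * pz (θS t) q + s * uT t q)) p
      = -((pz (c1 uS t) p * px (θS t) p + c1 uS t p * pz (fun q => px (θS t) q) p
          + (pz (c2 uS t) p * pz (θS t) p + c2 uS t p * pz (fun q => pz (θS t) q) p))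
          + s * pz (uT t) p) :=
  ((((sliceZ smu1 t p).mul (sliceZ (sm_px smθ) t p)).add
     ((sliceZ smu2 t p).mul (sliceZ (sm_pz smθ) t p))).add
     ((sliceZ smuT t p).const_mul s)).neg.deriv

end Fields


section Loop
variable {uS : ℝ → ℝ×ℝ → ℝ×ℝ} {uT θS P : ℝ → ℝ×ℝ → ℝ} {f g θ₀ H s : ℝ}
  {c : ℝ → ℝ → ℝ×ℝ}

lemma loop_slice (hC : ContDiff ℝ ∞ (fun q : ℝ×ℝ => c q.1 q.2)) (t σ : ℝ) :
    HasDerivAt (fun σ' => c t σ') (csig c t σ) σ :=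
  (((hC.differentiable h1inf) (t, σ)).hasFDerivAt).comp_hasDerivAt σ
    ((hasDerivAt_const σ t).prodMk (hasDerivAt_id σ))

lemma loop_deriv (hC : ContDiff ℝ ∞ (fun q : ℝ×ℝ => c q.1 q.2)) (t σ : ℝ) :
    deriv (c t) σ = csig c t σ := (loop_slice hC t σ).deriv

lemma loop_t_fderiv (hC : ContDiff ℝ ∞ (fun q : ℝ×ℝ => c q.1 q.2))
    (hct : ∀ t σ, HasDerivAt (fun τ => c τ σ) (uS t (c t σ)) t) (q : ℝ×ℝ) :
    fderiv ℝ (fun q : ℝ×ℝ => c q.1 q.2) q ((1:ℝ), (0:ℝ)) = uS q.1 (c q.1 q.2) := by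
  have h1 := (((hC.differentiable h1inf) q).hasFDerivAt).comp_hasDerivAt q.1
    ((hasDerivAt_id q.1).prodMk (hasDerivAt_const q.1 q.2))
  exact h1.unique (hct q.1 q.2)

lemma csig_smooth (hC : ContDiff ℝ ∞ (fun q : ℝ×ℝ => c q.1 q.2)) :
    ContDiff ℝ ∞ (fun q : ℝ×ℝ => csig c q.1 q.2) := by
  show ContDiff ℝ ∞ (fun q : ℝ×ℝ =>
    fderiv ℝ (fun q' : ℝ×ℝ => c q'.1 q'.2) (q.1, q.2) ((0:ℝ), (1:ℝ)))
  exact (hC.fderiv_right hsinf).clm_apply contDiff_const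

lemma csig_t (smu1 : Sm (c1 uS)) (smu2 : Sm (c2 uS))
    (hu : ContDiff ℝ ∞ (fun q : ℝ × (ℝ×ℝ) => uS q.1 q.2))
    (hC : ContDiff ℝ ∞ (fun q : ℝ×ℝ => c q.1 q.2))
    (hct : ∀ t σ, HasDerivAt (fun τ => c τ σ) (uS t (c t σ)) t) (t σ : ℝ) :
    HasDerivAt (fun τ => csig c τ σ)
      ((csig c t σ).1 * px (c1 uS t) (c t σ) + (csig c t σ).2 * pz (c1 uS t) (c t σ),
       (csig c t σ).1 * px (c2 uS t) (c t σ) + (csig c t σ).2 * pz (c2 uS t) (c t σ)) t := by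
  have hDσ : ContDiff ℝ ∞ (fun q : ℝ×ℝ =>
      fderiv ℝ (fun q' : ℝ×ℝ => c q'.1 q'.2) q ((0:ℝ), (1:ℝ))) :=
    (hC.fderiv_right hsinf).clm_apply contDiff_const
  have hA : HasDerivAt (fun τ => csig c τ σ)
      (fderiv ℝ (fun q : ℝ×ℝ =>
        fderiv ℝ (fun q' : ℝ×ℝ => c q'.1 q'.2) q ((0:ℝ), (1:ℝ))) (t, σ) ((1:ℝ), (0:ℝ))) t := by
    have h := (((hDσ.differentiable h1inf) (t, σ)).hasFDerivAt).comp_hasDerivAt t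
      ((hasDerivAt_id t).prodMk (hasDerivAt_const t σ))
    exact h
  have hswap := fderiv_swap hC (t, σ) ((1:ℝ), (0:ℝ)) ((0:ℝ), (1:ℝ))
  have hfun : (fun y : ℝ×ℝ => fderiv ℝ (fun q' : ℝ×ℝ => c q'.1 q'.2) y ((1:ℝ), (0:ℝ)))
      = fun y : ℝ×ℝ => uS y.1 (c y.1 y.2) := funext (loop_t_fderiv hC hct)
  have hU : ContDiff ℝ ∞ (fun y : ℝ×ℝ => uS y.1 (c y.1 y.2)) :=
    hu.comp (contDiff_fst.prodMk hC)
  have hW := (chainS smu1 (hasDerivAt_const σ t) (loop_slice hC t σ)).prodMk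
    (chainS smu2 (hasDerivAt_const σ t) (loop_slice hC t σ))
  have hslice : HasDerivAt (fun σ' => uS t (c t σ'))
      (fderiv ℝ (fun y : ℝ×ℝ => uS y.1 (c y.1 y.2)) (t, σ) ((0:ℝ), (1:ℝ))) σ :=
    (((hU.differentiable h1inf) (t, σ)).hasFDerivAt).comp_hasDerivAt σ
      ((hasDerivAt_const σ t).prodMk (hasDerivAt_id σ))
  have huniq := hslice.unique hW
  convert hA using 1
  rw [hswap, hfun, huniq]
  simp only [Prod.mk.injEq]
  constructor <;> ring

end Loop

/-- primed comm lemma in beta-reduced form -/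
lemma px_pz_comm' {f : ℝ → ℝ × ℝ → ℝ} (hf : Sm f) (t : ℝ) (p : ℝ × ℝ) :
    px (fun q => pz (f t) q) p = pz (fun q => px (f t) q) p := px_pz_comm hf t p

end EadyAux

namespace EadyAux
section Key
variable {uS : ℝ → ℝ×ℝ → ℝ×ℝ} {uT θS P : ℝ → ℝ×ℝ → ℝ} {f g θ₀ H s : ℝ}
  {c : ℝ → ℝ → ℝ×ℝ}

lemma key (smu1 : Sm (c1 uS)) (smu2 : Sm (c2 uS)) (smuT : Sm uT) (smθ : Sm θS) (smP : Sm P)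
    (hu : ContDiff ℝ ∞ (fun q : ℝ × (ℝ×ℝ) => uS q.1 q.2))
    (hC : ContDiff ℝ ∞ (fun q : ℝ×ℝ => c q.1 q.2))
    (hct : ∀ t σ, HasDerivAt (fun τ => c τ σ) (uS t (c t σ)) t)
    (hE1x : ∀ t p, pt (c1 uS) t p + adv uS (c1 uS) t p - f * uT t p = -px (P t) p)
    (hE1z : ∀ t p, pt (c2 uS) t p + adv uS (c2 uS) t p = -pz (P t) p + (g / θ₀) * θS t p)
    (hE2 : ∀ t p, pt uT t p + adv uS uT t p + f * (uS t p).1 = -((g / θ₀) * (p.2 - H / 2) * s))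
    (hE4 : ∀ t p, pt θS t p + adv uS θS t p + s * uT t p = 0)
    (t σ : ℝ) :
    HasDerivAt (fun τ => VV1 uS uT θS f s τ (c τ σ) * (csig c τ σ).1
        + VV2 uS uT θS f s τ (c τ σ) * (csig c τ σ).2)
      ((csig c t σ).1 * px (PhiF uS uT θS P f g θ₀ H s t) (c t σ)
        + (csig c t σ).2 * pz (PhiF uS uT θS P f g θ₀ H s t) (c t σ)) t := by
  have smV1 : Sm (VV1 uS uT θS f s) := sm_VV1 smu1 smuT smθ
  have smV2 : Sm (VV2 uS uT θS f s) := sm_VV2 smu2 smuT smθ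
  have A1 := chainS smV1 (hasDerivAt_id t) (hct t σ)
  have A2 := chainS smV2 (hasDerivAt_id t) (hct t σ)
  have B := csig_t smu1 smu2 hu hC hct t σ
  have B1 : HasDerivAt (fun τ => (csig c τ σ).1)
      ((csig c t σ).1 * px (c1 uS t) (c t σ) + (csig c t σ).2 * pz (c1 uS t) (c t σ)) t := by
    exact (hasFDerivAt_fst (𝕜 := ℝ)).comp_hasDerivAt t B
  have B2 : HasDerivAt (fun τ => (csig c τ σ).2)
      ((csig c t σ).1 * px (c2 uS t) (c t σ) + (csig c t σ).2 * pz (c2 uS t) (c t σ)) t := by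
    exact (hasFDerivAt_snd (𝕜 := ℝ)).comp_hasDerivAt t B
  have HT := (A1.mul B1).add (A2.mul B2)
  refine HasDerivAt.congr_deriv HT (Eq.symm ?_)
  simp only [id_eq]
  set p : ℝ × ℝ := c t σ with hp
  have hptθ : pt θS t
      = fun q => -((uS t q).1 * px (θS t) q + (uS t q).2 * pz (θS t) q + s * uT t q) :=
    funext fun q => by have h := hE4 t q; simp only [adv] at h; linarith
  have h12 : pt (c1 uS) t p = f * uT t p - px (P t) p
      - ((uS t p).1 * px (c1 uS t) p + (uS t p).2 * pz (c1 uS t) p) := by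
    have h := hE1x t p; simp only [adv] at h; linarith
  have h13 : pt (c2 uS) t p = -(pz (P t) p) + g / θ₀ * θS t p
      - ((uS t p).1 * px (c2 uS t) p + (uS t p).2 * pz (c2 uS t) p) := by
    have h := hE1z t p; simp only [adv] at h; linarith
  have h14 : pt uT t p = -(g / θ₀ * (p.2 - H / 2) * s) - f * (uS t p).1
      - ((uS t p).1 * px (uT t) p + (uS t p).2 * pz (uT t) p) := by
    have h := hE2 t p; simp only [adv] at h; linarith
  rw [exp_ptV1 smu1 smu2 smuT smθ smP t p, exp_pxV1 smu1 smu2 smuT smθ smP t p,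
      exp_pzV1' smu1 smu2 smuT smθ smP t p, exp_ptV2 smu1 smu2 smuT smθ smP t p,
      exp_pzV1 smu1 smu2 smuT smθ smP t p, exp_pzV2 smu1 smu2 smuT smθ smP t p,
      exp_pxPhi smu1 smu2 smuT smθ smP t p, exp_pzPhi smu1 smu2 smuT smθ smP t p,
      pt_px_comm smθ, pt_pz_comm smθ, hptθ,
      exp_px_ptθ smu1 smu2 smuT smθ smP t p, exp_pz_ptθ smu1 smu2 smuT smθ smP t p,
      h12, h13, h14]
  simp only [px_pz_comm' smθ]
  simp only [VV1, VV2, c1, c2]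
  ring

end Key
end EadyAux


open EadyAux in
/-- Kelvin circulation conservation for the Euler–Boussinesq Eady
model: under (E1)–(E4), the circulation ∮ (s u_S − (u_T + f x)∇θ_S)·dx around
any loop advected by u_S is constant in time. -/
theorem eady_kelvin_circulation
    (uS : ℝ → ℝ × ℝ → ℝ × ℝ) (uT θS P : ℝ → ℝ × ℝ → ℝ)
    (f g θ₀ H s : ℝ) (hf : 0 < f) (hg : 0 < g) (hθ₀ : 0 < θ₀)
    (huS : SmoothV uS) (huT : SmoothS uT) (hθS : SmoothS θS) (hP : SmoothS P)
    (hE1x : ∀ t p, pt (c1 uS) t p + adv uS (c1 uS) t p - f * uT t p = -px (P t) p)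
    (hE1z : ∀ t p, pt (c2 uS) t p + adv uS (c2 uS) t p
        = -pz (P t) p + (g / θ₀) * θS t p)
    (hE2 : ∀ t p, pt uT t p + adv uS uT t p + f * (uS t p).1
        = -((g / θ₀) * (p.2 - H / 2) * s))
    (hE3 : ∀ t p, px (c1 uS t) p + pz (c2 uS t) p = 0)
    (hE4 : ∀ t p, pt θS t p + adv uS θS t p + s * uT t p = 0)
    (c : ℝ → ℝ → ℝ × ℝ) (hc : AdvectedLoop uS c) :
    ∀ t₁ t₂ : ℝ,
      (∫ σ in (0:ℝ)..1,
        dot (s * (uS t₁ (c t₁ σ)).1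
               - (uT t₁ (c t₁ σ) + f * (c t₁ σ).1) * px (θS t₁) (c t₁ σ),
             s * (uS t₁ (c t₁ σ)).2
               - (uT t₁ (c t₁ σ) + f * (c t₁ σ).1) * pz (θS t₁) (c t₁ σ))
            (deriv (c t₁) σ))
      =
      (∫ σ in (0:ℝ)..1,
        dot (s * (uS t₂ (c t₂ σ)).1
               - (uT t₂ (c t₂ σ) + f * (c t₂ σ).1) * px (θS t₂) (c t₂ σ),
             s * (uS t₂ (c t₂ σ)).2
               - (uT t₂ (c t₂ σ) + f * (c t₂ σ).1) * pz (θS t₂) (c t₂ σ))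
            (deriv (c t₂) σ)) := by
  intro t₁ t₂
  obtain ⟨hcsm, hper, hct⟩ := hc
  have hu : ContDiff ℝ ∞ (fun q : ℝ × (ℝ × ℝ) => uS q.1 q.2) := huS.of_le (by simp)
  have smu1 : Sm (c1 uS) := contDiff_fst.comp hu
  have smu2 : Sm (c2 uS) := contDiff_snd.comp hu
  have smuT : Sm uT := huT.of_le (by simp)
  have smθ : Sm θS := hθS.of_le (by simp)
  have smP : Sm P := hP.of_le (by simp)
  have hC : ContDiff ℝ ∞ (fun q : ℝ × ℝ => c q.1 q.2) := hcsm.of_le (by simp)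
  have smΦ : Sm (PhiF uS uT θS P f g θ₀ H s) := sm_PhiF smu1 smu2 smuT smθ smP
  -- rewrite both integrals into the canonical form
  have hIeq : ∀ t : ℝ,
      (∫ σ in (0:ℝ)..1,
        dot (s * (uS t (c t σ)).1 - (uT t (c t σ) + f * (c t σ).1) * px (θS t) (c t σ),
             s * (uS t (c t σ)).2 - (uT t (c t σ) + f * (c t σ).1) * pz (θS t) (c t σ))
            (deriv (c t) σ))
      = ∫ σ in (0:ℝ)..1, (VV1 uS uT θS f s t (c t σ) * (csig c t σ).1 + VV2 uS uT θS f s t (c t σ) * (csig c t σ).2) := by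
    intro t
    apply intervalIntegral.integral_congr
    intro σ _
    simp only [loop_deriv hC, dot, VV1, VV2]
  rw [hIeq t₁, hIeq t₂]
  -- continuity facts
  have hcs : Continuous (fun q : ℝ × ℝ => csig c q.1 q.2) := (csig_smooth hC).continuous
  have hV1c : Continuous (fun q : ℝ × ℝ => VV1 uS uT θS f s q.1 (c q.1 q.2)) :=
    (ContDiff.continuous (sm_VV1 smu1 smuT smθ)).comp (continuous_fst.prodMk hC.continuous)
  have hV2c : Continuous (fun q : ℝ × ℝ => VV2 uS uT θS f s q.1 (c q.1 q.2)) :=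
    (ContDiff.continuous (sm_VV2 smu2 smuT smθ)).comp (continuous_fst.prodMk hC.continuous)
  have hFcont : Continuous (fun q : ℝ × ℝ =>
      VV1 uS uT θS f s q.1 (c q.1 q.2) * (csig c q.1 q.2).1
        + VV2 uS uT θS f s q.1 (c q.1 q.2) * (csig c q.1 q.2).2) :=
    (hV1c.mul hcs.fst).add (hV2c.mul hcs.snd)
  have hPxc : Continuous (fun q : ℝ × ℝ =>
      px (PhiF uS uT θS P f g θ₀ H s q.1) (c q.1 q.2)) :=
    (ContDiff.continuous (sm_px smΦ)).comp (continuous_fst.prodMk hC.continuous)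
  have hPzc : Continuous (fun q : ℝ × ℝ =>
      pz (PhiF uS uT θS P f g θ₀ H s q.1) (c q.1 q.2)) :=
    (ContDiff.continuous (sm_pz smΦ)).comp (continuous_fst.prodMk hC.continuous)
  have hDc : Continuous (fun q : ℝ × ℝ =>
      (csig c q.1 q.2).1 * px (PhiF uS uT θS P f g θ₀ H s q.1) (c q.1 q.2)
        + (csig c q.1 q.2).2 * pz (PhiF uS uT θS P f g θ₀ H s q.1) (c q.1 q.2)) :=
    (hcs.fst.mul hPxc).add (hcs.snd.mul hPzc)
  -- fundamental theorem of calculus in time, for each σ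
  have hFTC : ∀ σ : ℝ, (VV1 uS uT θS f s t₂ (c t₂ σ) * (csig c t₂ σ).1 + VV2 uS uT θS f s t₂ (c t₂ σ) * (csig c t₂ σ).2) - (VV1 uS uT θS f s t₁ (c t₁ σ) * (csig c t₁ σ).1 + VV2 uS uT θS f s t₁ (c t₁ σ) * (csig c t₁ σ).2)
      = ∫ t in t₁..t₂, ((csig c t σ).1 * px (PhiF uS uT θS P f g θ₀ H s t) (c t σ) + (csig c t σ).2 * pz (PhiF uS uT θS P f g θ₀ H s t) (c t σ)) := by
    intro σ
    exact (intervalIntegral.integral_eq_sub_of_hasDerivAt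
      (fun t _ => key smu1 smu2 smuT smθ smP hu hC hct hE1x hE1z hE2 hE4 t σ)
      ((hDc.comp (continuous_id.prodMk continuous_const)).intervalIntegrable t₁ t₂)).symm
  -- the σ-integral of the exact form vanishes on the closed loop
  have hGσ : ∀ t σ : ℝ, HasDerivAt (fun σ' => PhiF uS uT θS P f g θ₀ H s t (c t σ'))
      ((csig c t σ).1 * px (PhiF uS uT θS P f g θ₀ H s t) (c t σ) + (csig c t σ).2 * pz (PhiF uS uT θS P f g θ₀ H s t) (c t σ)) σ := by
    intro t σ
    have h := chainS smΦ (hasDerivAt_const σ t) (loop_slice hC t σ)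
    convert h using 1
    ring
  have hinner : ∀ t : ℝ, (∫ σ in (0:ℝ)..1, ((csig c t σ).1 * px (PhiF uS uT θS P f g θ₀ H s t) (c t σ) + (csig c t σ).2 * pz (PhiF uS uT θS P f g θ₀ H s t) (c t σ))) = 0 := by
    intro t
    rw [intervalIntegral.integral_eq_sub_of_hasDerivAt (fun σ _ => hGσ t σ)
      ((hDc.comp (continuous_const.prodMk continuous_id)).intervalIntegrable 0 1)]
    rw [← hper t]
    exact sub_self _
  have hi1 : IntervalIntegrable (fun σ => (VV1 uS uT θS f s t₁ (c t₁ σ) * (csig c t₁ σ).1 + VV2 uS uT θS f s t₁ (c t₁ σ) * (csig c t₁ σ).2)) volume 0 1 :=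
    (hFcont.comp (continuous_const.prodMk continuous_id)).intervalIntegrable 0 1
  have hi2 : IntervalIntegrable (fun σ => (VV1 uS uT θS f s t₂ (c t₂ σ) * (csig c t₂ σ).1 + VV2 uS uT θS f s t₂ (c t₂ σ) * (csig c t₂ σ).2)) volume 0 1 :=
    (hFcont.comp (continuous_const.prodMk continuous_id)).intervalIntegrable 0 1
  have hdiff : (∫ σ in (0:ℝ)..1, (VV1 uS uT θS f s t₂ (c t₂ σ) * (csig c t₂ σ).1 + VV2 uS uT θS f s t₂ (c t₂ σ) * (csig c t₂ σ).2)) - (∫ σ in (0:ℝ)..1, (VV1 uS uT θS f s t₁ (c t₁ σ) * (csig c t₁ σ).1 + VV2 uS uT θS f s t₁ (c t₁ σ) * (csig c t₁ σ).2)) = 0 := by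
    rw [← intervalIntegral.integral_sub hi2 hi1]
    have hcg : (∫ σ in (0:ℝ)..1, ((VV1 uS uT θS f s t₂ (c t₂ σ) * (csig c t₂ σ).1 + VV2 uS uT θS f s t₂ (c t₂ σ) * (csig c t₂ σ).2) - (VV1 uS uT θS f s t₁ (c t₁ σ) * (csig c t₁ σ).1 + VV2 uS uT θS f s t₁ (c t₁ σ) * (csig c t₁ σ).2)))
        = ∫ σ in (0:ℝ)..1, ∫ t in t₁..t₂, ((csig c t σ).1 * px (PhiF uS uT θS P f g θ₀ H s t) (c t σ) + (csig c t σ).2 * pz (PhiF uS uT θS P f g θ₀ H s t) (c t σ)) :=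
      intervalIntegral.integral_congr fun σ _ => hFTC σ
    rw [hcg]
    rw [interval_swap (f := fun σ t => ((csig c t σ).1 * px (PhiF uS uT θS P f g θ₀ H s t) (c t σ) + (csig c t σ).2 * pz (PhiF uS uT θS P f g θ₀ H s t) (c t σ))) (hDc.comp continuous_swap) 0 1 t₁ t₂]
    have hz : (∫ t in t₁..t₂, ∫ σ in (0:ℝ)..1, ((csig c t σ).1 * px (PhiF uS uT θS P f g θ₀ H s t) (c t σ) + (csig c t σ).2 * pz (PhiF uS uT θS P f g θ₀ H s t) (c t σ))) = ∫ t in t₁..t₂, (0:ℝ) :=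
      intervalIntegral.integral_congr fun t _ => hinner t
    rw [hz]
    simp
  linarith [hdiff]
end
end

section
/- (Potential vorticity conservation for the Euler–Boussinesq Eady model.) Suppose the smooth fields u_S = (u,w), u_T, θ_S, p satisfy the Eady–Boussinesq slice system (E1)–(E4). Then the potential vorticity q := s(∂_z u − ∂_x w) + ∂_z θ_S (∂_x u_T + f) − ∂_x θ_S ∂_z u_T satisfies ∂_t q + u_S·∇ q = 0. -/
noncomputable section

/-! ### Auxiliary infrastructure: directional derivatives on ℝ × (ℝ × ℝ) -/

/-- The joint time-space domain. -/
abbrev EE := ℝ × (ℝ × ℝ)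

/-- Directional derivative of a scalar field on `EE` in direction `v`. -/
def A (F : EE → ℝ) (v w : EE) : ℝ := fderiv ℝ F w v

/-- Time direction. -/
def et : EE := (1, (0, 0))
/-- x direction. -/
def ex : EE := (0, (1, 0))
/-- z direction. -/
def ez : EE := (0, (0, 1))

lemma smoothA {F : EE → ℝ} (hF : ContDiff ℝ (⊤ : ℕ∞) F) (v : EE) : ContDiff ℝ (⊤ : ℕ∞) (A F v) := by
  have h1 : ContDiff ℝ (⊤ : ℕ∞) (fderiv ℝ F) := hF.fderiv_right (by simp)
  exact (ContinuousLinearMap.apply ℝ ℝ v).contDiff.comp h1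

lemma diffA {F : EE → ℝ} (hF : ContDiff ℝ (⊤ : ℕ∞) F) (v : EE) : Differentiable ℝ (A F v) :=
  (smoothA hF v).differentiable (by simp)

lemma A_app {F : EE → ℝ} (hF : ContDiff ℝ (⊤ : ℕ∞) F) (u w x : EE) :
    A (A F u) w x = (fderiv ℝ (fderiv ℝ F) x) w u := by
  have hd2 : HasFDerivAt (fderiv ℝ F) (fderiv ℝ (fderiv ℝ F) x) x :=
    ((hF.fderiv_right (m := (⊤ : ℕ∞)) (by simp)).differentiable (by simp) x).hasFDerivAt
  have h : HasFDerivAt (fun y => (fderiv ℝ F y) u)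
      ((ContinuousLinearMap.apply ℝ ℝ u).comp (fderiv ℝ (fderiv ℝ F) x)) x :=
    (ContinuousLinearMap.apply ℝ ℝ u).hasFDerivAt.comp x hd2
  have e : A F u = fun y => (fderiv ℝ F y) u := rfl
  rw [A, e, h.fderiv]; rfl

/-- Symmetry of second directional derivatives for smooth fields. -/
lemma A_comm {F : EE → ℝ} (hF : ContDiff ℝ (⊤ : ℕ∞) F) (v w x : EE) :
    A (A F v) w x = A (A F w) v x := by
  have hd : ∀ y, HasFDerivAt F (fderiv ℝ F y) y :=
    fun y => (hF.differentiable (by simp) y).hasFDerivAt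
  have hd2 : HasFDerivAt (fderiv ℝ F) (fderiv ℝ (fderiv ℝ F) x) x :=
    ((hF.fderiv_right (m := (⊤ : ℕ∞)) (by simp)).differentiable (by simp) x).hasFDerivAt
  rw [A_app hF, A_app hF, second_derivative_symmetric hd hd2 w v]

lemma A_congr {F G : EE → ℝ} (h : ∀ y, F y = G y) (v w : EE) : A F v w = A G v w := by
  rw [A, A, funext h]

lemma A_add {F G : EE → ℝ} {w : EE} (hF : DifferentiableAt ℝ F w)
    (hG : DifferentiableAt ℝ G w) (v : EE) :
    A (fun y => F y + G y) v w = A F v w + A G v w := by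
  simp [A, fderiv_fun_add hF hG]

lemma A_sub {F G : EE → ℝ} {w : EE} (hF : DifferentiableAt ℝ F w)
    (hG : DifferentiableAt ℝ G w) (v : EE) :
    A (fun y => F y - G y) v w = A F v w - A G v w := by
  simp [A, fderiv_fun_sub hF hG]

lemma A_mul {F G : EE → ℝ} {w : EE} (hF : DifferentiableAt ℝ F w)
    (hG : DifferentiableAt ℝ G w) (v : EE) :
    A (fun y => F y * G y) v w = A F v w * G w + F w * A G v w := by
  simp [A, fderiv_fun_mul hF hG]; ring

lemma A_neg {F : EE → ℝ} {w : EE} (v : EE) :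
    A (fun y => -F y) v w = -A F v w := by
  simp [A, fderiv_neg]

lemma A_const (c : ℝ) (v w : EE) : A (fun _ => c) v w = 0 := by
  simp [A]

lemma A_const_mul {F : EE → ℝ} {w : EE} (hF : DifferentiableAt ℝ F w) (c : ℝ) (v : EE) :
    A (fun y => c * F y) v w = c * A F v w := by
  simp [A, fderiv_const_mul hF]

@[simp] lemma et22 : et.2.2 = 0 := rfl
@[simp] lemma ex22 : ex.2.2 = 0 := rfl
@[simp] lemma ez22 : ez.2.2 = 1 := rfl

lemma A_z (v w : EE) : A (fun y : EE => y.2.2) v w = v.2.2 := by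
  have h : HasFDerivAt (fun y : EE => y.2.2)
      ((ContinuousLinearMap.snd ℝ ℝ ℝ).comp (ContinuousLinearMap.snd ℝ ℝ (ℝ × ℝ))) w :=
    ((ContinuousLinearMap.snd ℝ ℝ ℝ).comp (ContinuousLinearMap.snd ℝ ℝ (ℝ × ℝ))).hasFDerivAt
  rw [A, h.fderiv]; rfl

/-- Abstract form of potential vorticity conservation, in terms of joint
directional derivatives on `EE`. -/
theorem pv_abstract (U W T Θ Pr : EE → ℝ) (f g θ₀ H s : ℝ)
    (hU : ContDiff ℝ (⊤ : ℕ∞) U) (hW : ContDiff ℝ (⊤ : ℕ∞) W) (hT : ContDiff ℝ (⊤ : ℕ∞) T)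
    (hΘ : ContDiff ℝ (⊤ : ℕ∞) Θ) (hPr : ContDiff ℝ (⊤ : ℕ∞) Pr)
    (H1 : ∀ w, A U et w + (U w * A U ex w + W w * A U ez w) - f * T w = -A Pr ex w)
    (H2 : ∀ w, A W et w + (U w * A W ex w + W w * A W ez w) = -A Pr ez w + g / θ₀ * Θ w)
    (H3 : ∀ w, A T et w + (U w * A T ex w + W w * A T ez w) + f * U w
        = -(g / θ₀ * (w.2.2 - H / 2) * s))
    (H4 : ∀ w, A U ex w + A W ez w = 0)
    (H5 : ∀ w, A Θ et w + (U w * A Θ ex w + W w * A Θ ez w) + s * T w = 0)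
    (Q : EE → ℝ)
    (hQ : ∀ w, Q w = s * (A U ez w - A W ex w)
        + A Θ ez w * (A T ex w + f) - A Θ ex w * A T ez w)
    (x : EE) :
    A Q et x + (U x * A Q ex x + W x * A Q ez x) = 0 := by
  have hdU : Differentiable ℝ U := hU.differentiable (by simp)
  have hdW : Differentiable ℝ W := hW.differentiable (by simp)
  have hdT : Differentiable ℝ T := hT.differentiable (by simp)
  have hdΘ : Differentiable ℝ Θ := hΘ.differentiable (by simp)
  have hdPr : Differentiable ℝ Pr := hPr.differentiable (by simp)
  have hdUt : Differentiable ℝ (A U et) := diffA hU et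
  have hdUx : Differentiable ℝ (A U ex) := diffA hU ex
  have hdUz : Differentiable ℝ (A U ez) := diffA hU ez
  have hdWt : Differentiable ℝ (A W et) := diffA hW et
  have hdWx : Differentiable ℝ (A W ex) := diffA hW ex
  have hdWz : Differentiable ℝ (A W ez) := diffA hW ez
  have hdTt : Differentiable ℝ (A T et) := diffA hT et
  have hdTx : Differentiable ℝ (A T ex) := diffA hT ex
  have hdTz : Differentiable ℝ (A T ez) := diffA hT ez
  have hdΘt : Differentiable ℝ (A Θ et) := diffA hΘ et
  have hdΘx : Differentiable ℝ (A Θ ex) := diffA hΘ ex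
  have hdΘz : Differentiable ℝ (A Θ ez) := diffA hΘ ez
  have hdPx : Differentiable ℝ (A Pr ex) := diffA hPr ex
  have hdPz : Differentiable ℝ (A Pr ez) := diffA hPr ez
  -- differentiated equations at x
  have e1z := A_congr H1 ez x
  have e2x := A_congr H2 ex x
  have e3x := A_congr H3 ex x
  have e3z := A_congr H3 ez x
  have e5x := A_congr H5 ex x
  have e5z := A_congr H5 ez x
  have gQt := A_congr hQ et x
  have gQx := A_congr hQ ex x
  have gQz := A_congr hQ ez x
  simp (disch := fun_prop) only [A_add, A_sub, A_mul, A_neg, A_const, A_const_mul, A_z,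
    et22, ex22, ez22] at e1z e2x e3x e3z e5x e5z gQt gQx gQz
  -- normalize the order of mixed second derivatives
  simp only [A_comm hU ex et x, A_comm hU ez et x, A_comm hU ez ex x,
    A_comm hW ex et x, A_comm hW ez et x, A_comm hW ez ex x,
    A_comm hT ex et x, A_comm hT ez et x, A_comm hT ez ex x,
    A_comm hΘ ex et x, A_comm hΘ ez et x, A_comm hΘ ez ex x,
    A_comm hPr ez ex x] at e1z e2x e3x e3z e5x e5z gQt gQx gQz
  rw [gQt, gQx, gQz]
  linear_combination s * e1z - s * e2x + (A T ex x + f) * e5z + A Θ ez x * e3x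
    - A T ez x * e5x - A Θ ex x * e3z
    - (s * (A U ez x - A W ex x) + A Θ ez x * (A T ex x + f) - A T ez x * A Θ ex x) * (H4 x)

lemma px_bridge {F : EE → ℝ} (hF : Differentiable ℝ F) (t : ℝ) (p : ℝ × ℝ) :
    px (fun p' => F (t, p')) p = A F ex (t, p) := by
  have hγ : HasDerivAt (fun x : ℝ => ((t, (x, p.2)) : EE)) ex p.1 :=
    HasDerivAt.prodMk (hasDerivAt_const p.1 t) (HasDerivAt.prodMk (hasDerivAt_id p.1) (hasDerivAt_const p.1 p.2))
  have h := (hF (t, (p.1, p.2))).hasFDerivAt.comp_hasDerivAt p.1 hγ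
  simpa [px, A, Function.comp_def] using h.deriv

lemma pz_bridge {F : EE → ℝ} (hF : Differentiable ℝ F) (t : ℝ) (p : ℝ × ℝ) :
    pz (fun p' => F (t, p')) p = A F ez (t, p) := by
  have hγ : HasDerivAt (fun z : ℝ => ((t, (p.1, z)) : EE)) ez p.2 :=
    HasDerivAt.prodMk (hasDerivAt_const p.2 t) (HasDerivAt.prodMk (hasDerivAt_const p.2 p.1) (hasDerivAt_id p.2))
  have h := (hF (t, (p.1, p.2))).hasFDerivAt.comp_hasDerivAt p.2 hγ
  simpa [pz, A, Function.comp_def] using h.deriv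

lemma pt_bridge {F : EE → ℝ} (hF : Differentiable ℝ F) (t : ℝ) (p : ℝ × ℝ) :
    deriv (fun s => F (s, p)) t = A F et (t, p) := by
  have hγ : HasDerivAt (fun s : ℝ => ((s, p) : EE)) et t :=
    HasDerivAt.prodMk (hasDerivAt_id t) (hasDerivAt_const t p)
  have h := (hF (t, p)).hasFDerivAt.comp_hasDerivAt t hγ
  simpa [A, Function.comp_def] using h.deriv

/-- Potential vorticity conservation for the Euler–Boussinesq Eady
model: under (E1)–(E4), the potential vorticity
q = s(∂_z u − ∂_x w) + ∂_z θ_S (∂_x u_T + f) − ∂_x θ_S ∂_z u_T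
is advected: ∂ₜ q + u_S·∇q = 0. -/
theorem eady_potential_vorticity_conservation
    (uS : ℝ → ℝ × ℝ → ℝ × ℝ) (uT θS P : ℝ → ℝ × ℝ → ℝ)
    (f g θ₀ H s : ℝ) (hf : 0 < f) (hg : 0 < g) (hθ₀ : 0 < θ₀)
    (huS : SmoothV uS) (huT : SmoothS uT) (hθS : SmoothS θS) (hP : SmoothS P)
    (hE1x : ∀ t p, pt (c1 uS) t p + adv uS (c1 uS) t p - f * uT t p = -px (P t) p)
    (hE1z : ∀ t p, pt (c2 uS) t p + adv uS (c2 uS) t p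
        = -pz (P t) p + (g / θ₀) * θS t p)
    (hE2 : ∀ t p, pt uT t p + adv uS uT t p + f * (uS t p).1
        = -((g / θ₀) * (p.2 - H / 2) * s))
    (hE3 : ∀ t p, px (c1 uS t) p + pz (c2 uS t) p = 0)
    (hE4 : ∀ t p, pt θS t p + adv uS θS t p + s * uT t p = 0)
    (q : ℝ → ℝ × ℝ → ℝ)
    (hq : ∀ t p, q t p = s * (pz (c1 uS t) p - px (c2 uS t) p)
        + pz (θS t) p * (px (uT t) p + f) - px (θS t) p * pz (uT t) p) :
    ∀ t p, pt q t p + adv uS q t p = 0 := by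
  have huS' : ContDiff ℝ (⊤ : ℕ∞) (fun w : EE => uS w.1 w.2) := huS
  have hU : ContDiff ℝ (⊤ : ℕ∞) (fun w : EE => (uS w.1 w.2).1) := huS'.fst
  have hW : ContDiff ℝ (⊤ : ℕ∞) (fun w : EE => (uS w.1 w.2).2) := huS'.snd
  have hT : ContDiff ℝ (⊤ : ℕ∞) (fun w : EE => uT w.1 w.2) := huT
  have hΘ : ContDiff ℝ (⊤ : ℕ∞) (fun w : EE => θS w.1 w.2) := hθS
  have hPr : ContDiff ℝ (⊤ : ℕ∞) (fun w : EE => P w.1 w.2) := hP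
  have hdU := hU.differentiable (by simp)
  have hdW := hW.differentiable (by simp)
  have hdT := hT.differentiable (by simp)
  have hdΘ := hΘ.differentiable (by simp)
  have hdPr := hPr.differentiable (by simp)
  -- bridge equalities
  have bUt : ∀ (t : ℝ) (p : ℝ × ℝ), pt (c1 uS) t p
      = A (fun w : EE => (uS w.1 w.2).1) et (t, p) := fun t p => pt_bridge hdU t p
  have bUx : ∀ (t : ℝ) (p : ℝ × ℝ), px (c1 uS t) p
      = A (fun w : EE => (uS w.1 w.2).1) ex (t, p) := fun t p => px_bridge hdU t p
  have bUz : ∀ (t : ℝ) (p : ℝ × ℝ), pz (c1 uS t) p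
      = A (fun w : EE => (uS w.1 w.2).1) ez (t, p) := fun t p => pz_bridge hdU t p
  have bWt : ∀ (t : ℝ) (p : ℝ × ℝ), pt (c2 uS) t p
      = A (fun w : EE => (uS w.1 w.2).2) et (t, p) := fun t p => pt_bridge hdW t p
  have bWx : ∀ (t : ℝ) (p : ℝ × ℝ), px (c2 uS t) p
      = A (fun w : EE => (uS w.1 w.2).2) ex (t, p) := fun t p => px_bridge hdW t p
  have bWz : ∀ (t : ℝ) (p : ℝ × ℝ), pz (c2 uS t) p
      = A (fun w : EE => (uS w.1 w.2).2) ez (t, p) := fun t p => pz_bridge hdW t p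
  have bTt : ∀ (t : ℝ) (p : ℝ × ℝ), pt uT t p
      = A (fun w : EE => uT w.1 w.2) et (t, p) := fun t p => pt_bridge hdT t p
  have bTx : ∀ (t : ℝ) (p : ℝ × ℝ), px (uT t) p
      = A (fun w : EE => uT w.1 w.2) ex (t, p) := fun t p => px_bridge hdT t p
  have bTz : ∀ (t : ℝ) (p : ℝ × ℝ), pz (uT t) p
      = A (fun w : EE => uT w.1 w.2) ez (t, p) := fun t p => pz_bridge hdT t p
  have bΘt : ∀ (t : ℝ) (p : ℝ × ℝ), pt θS t p
      = A (fun w : EE => θS w.1 w.2) et (t, p) := fun t p => pt_bridge hdΘ t p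
  have bΘx : ∀ (t : ℝ) (p : ℝ × ℝ), px (θS t) p
      = A (fun w : EE => θS w.1 w.2) ex (t, p) := fun t p => px_bridge hdΘ t p
  have bΘz : ∀ (t : ℝ) (p : ℝ × ℝ), pz (θS t) p
      = A (fun w : EE => θS w.1 w.2) ez (t, p) := fun t p => pz_bridge hdΘ t p
  have bPx : ∀ (t : ℝ) (p : ℝ × ℝ), px (P t) p
      = A (fun w : EE => P w.1 w.2) ex (t, p) := fun t p => px_bridge hdPr t p
  have bPz : ∀ (t : ℝ) (p : ℝ × ℝ), pz (P t) p
      = A (fun w : EE => P w.1 w.2) ez (t, p) := fun t p => pz_bridge hdPr t p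
  -- the hypotheses in abstract form
  have H1 : ∀ w : EE, A (fun w : EE => (uS w.1 w.2).1) et w
      + ((fun w : EE => (uS w.1 w.2).1) w * A (fun w : EE => (uS w.1 w.2).1) ex w
        + (fun w : EE => (uS w.1 w.2).2) w * A (fun w : EE => (uS w.1 w.2).1) ez w)
      - f * (fun w : EE => uT w.1 w.2) w = -A (fun w : EE => P w.1 w.2) ex w := by
    intro w
    have h := hE1x w.1 w.2
    unfold adv at h
    rw [bUt w.1 w.2, bUx w.1 w.2, bUz w.1 w.2, bPx w.1 w.2] at h
    exact h
  have H2 : ∀ w : EE, A (fun w : EE => (uS w.1 w.2).2) et w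
      + ((fun w : EE => (uS w.1 w.2).1) w * A (fun w : EE => (uS w.1 w.2).2) ex w
        + (fun w : EE => (uS w.1 w.2).2) w * A (fun w : EE => (uS w.1 w.2).2) ez w)
      = -A (fun w : EE => P w.1 w.2) ez w
        + g / θ₀ * (fun w : EE => θS w.1 w.2) w := by
    intro w
    have h := hE1z w.1 w.2
    unfold adv at h
    rw [bWt w.1 w.2, bWx w.1 w.2, bWz w.1 w.2, bPz w.1 w.2] at h
    exact h
  have H3 : ∀ w : EE, A (fun w : EE => uT w.1 w.2) et w
      + ((fun w : EE => (uS w.1 w.2).1) w * A (fun w : EE => uT w.1 w.2) ex w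
        + (fun w : EE => (uS w.1 w.2).2) w * A (fun w : EE => uT w.1 w.2) ez w)
      + f * (fun w : EE => (uS w.1 w.2).1) w
      = -(g / θ₀ * (w.2.2 - H / 2) * s) := by
    intro w
    have h := hE2 w.1 w.2
    unfold adv at h
    rw [bTt w.1 w.2, bTx w.1 w.2, bTz w.1 w.2] at h
    exact h
  have H4 : ∀ w : EE, A (fun w : EE => (uS w.1 w.2).1) ex w
      + A (fun w : EE => (uS w.1 w.2).2) ez w = 0 := by
    intro w
    have h := hE3 w.1 w.2
    rw [bUx w.1 w.2, bWz w.1 w.2] at h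
    exact h
  have H5 : ∀ w : EE, A (fun w : EE => θS w.1 w.2) et w
      + ((fun w : EE => (uS w.1 w.2).1) w * A (fun w : EE => θS w.1 w.2) ex w
        + (fun w : EE => (uS w.1 w.2).2) w * A (fun w : EE => θS w.1 w.2) ez w)
      + s * (fun w : EE => uT w.1 w.2) w = 0 := by
    intro w
    have h := hE4 w.1 w.2
    unfold adv at h
    rw [bΘt w.1 w.2, bΘx w.1 w.2, bΘz w.1 w.2] at h
    exact h
  -- the potential vorticity as a joint field
  set QQ : EE → ℝ := fun w =>
    s * (A (fun w : EE => (uS w.1 w.2).1) ez w - A (fun w : EE => (uS w.1 w.2).2) ex w)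
    + A (fun w : EE => θS w.1 w.2) ez w * (A (fun w : EE => uT w.1 w.2) ex w + f)
    - A (fun w : EE => θS w.1 w.2) ex w * A (fun w : EE => uT w.1 w.2) ez w with hQQdef
  have hQQ : ContDiff ℝ (⊤ : ℕ∞) QQ := by
    have a1 := smoothA hU ez
    have a2 := smoothA hW ex
    have a3 := smoothA hΘ ez
    have a4 := smoothA hΘ ex
    have a5 := smoothA hT ex
    have a6 := smoothA hT ez
    rw [hQQdef]; fun_prop
  have hdQ : Differentiable ℝ QQ := hQQ.differentiable (by simp)
  have hqQ : ∀ (t : ℝ) (p : ℝ × ℝ), q t p = QQ (t, p) := by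
    intro t p
    rw [hq t p, bUz t p, bWx t p, bΘz t p, bΘx t p, bTx t p, bTz t p]
  have key := pv_abstract (fun w : EE => (uS w.1 w.2).1) (fun w : EE => (uS w.1 w.2).2)
    (fun w : EE => uT w.1 w.2) (fun w : EE => θS w.1 w.2) (fun w : EE => P w.1 w.2)
    f g θ₀ H s hU hW hT hΘ hPr H1 H2 H3 H4 H5 QQ (fun w => rfl)
  intro t p
  have hpt : pt q t p = A QQ et (t, p) := by
    have e : (fun s' => q s' p) = fun s' => QQ (s', p) := funext fun s' => hqQ s' p
    rw [pt, e]; exact pt_bridge hdQ t p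
  have hpx : px (q t) p = A QQ ex (t, p) := by
    have e : q t = fun p' => QQ (t, p') := funext fun p' => hqQ t p'
    rw [e]; exact px_bridge hdQ t p
  have hpz : pz (q t) p = A QQ ez (t, p) := by
    have e : q t = fun p' => QQ (t, p') := funext fun p' => hqQ t p'
    rw [e]; exact pz_bridge hdQ t p
  show pt q t p + adv uS q t p = 0
  unfold adv
  rw [hpt, hpx, hpz]
  exact key (t, p)
end
end

section
/- (Energy conservation for the Euler–Boussinesq Eady model.) Suppose the smooth fields u_S = (u,w), u_T, θ_S, p satisfy the Eady–Boussinesq slice system (E1)–(E4) on the channel Ω = [0,L] × [0,H], with L, H > 0; suppose u_S, u_T, θ_S, p and all their derivatives are L-periodic in x, and w(t,(x,0)) = w(t,(x,H)) = 0 for all t, x. Then the energy h(t) := ∫_Ω [ ½(|u_S|² + u_T²) − (g/θ₀)(z − H/2)θ_S ](t,(x,z)) dx dz is constant in t. -/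
noncomputable section

variable {f : ℝ → ℝ × ℝ → ℝ}

theorem hasDerivAt_pt' (hf : SmoothS f) (t : ℝ) (p : ℝ × ℝ) :
    HasDerivAt (fun s => f s p) (pt f t p) t := by
  have hA : HasDerivAt (fun s : ℝ => (s, p)) ((1:ℝ), ((0:ℝ),(0:ℝ))) t :=
    (hasDerivAt_id t).prodMk (hasDerivAt_const t p)
  have hΦ := ((hf.differentiable (by simp)) (t, p)).hasFDerivAt
  have h2 : HasDerivAt (fun s => f s p) (fderiv ℝ (fun q : ℝ × (ℝ × ℝ) => f q.1 q.2) (t, p) (1,0,0)) t := by have := hΦ.comp_hasDerivAt t hA; exact this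
  rw [show pt f t p = deriv (fun s => f s p) t from rfl, h2.deriv]; exact h2

theorem hasDerivAt_px' (hf : SmoothS f) (t : ℝ) (p : ℝ × ℝ) :
    HasDerivAt (fun x => f t (x, p.2)) (px (f t) p) p.1 := by
  have hA : HasDerivAt (fun x : ℝ => (t, (x, p.2))) ((0:ℝ), ((1:ℝ),(0:ℝ))) p.1 :=
    (hasDerivAt_const p.1 t).prodMk ((hasDerivAt_id p.1).prodMk (hasDerivAt_const p.1 p.2))
  have hΦ := ((hf.differentiable (by simp)) (t, p)).hasFDerivAt
  have h2 : HasDerivAt (fun x => f t (x, p.2)) (fderiv ℝ (fun q : ℝ × (ℝ × ℝ) => f q.1 q.2) (t, p) (0,1,0)) p.1 := by have := hΦ.comp_hasDerivAt p.1 hA; exact this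
  rw [show px (f t) p = deriv (fun x => f t (x, p.2)) p.1 from rfl, h2.deriv]; exact h2

theorem hasDerivAt_pz' (hf : SmoothS f) (t : ℝ) (p : ℝ × ℝ) :
    HasDerivAt (fun z => f t (p.1, z)) (pz (f t) p) p.2 := by
  have hA : HasDerivAt (fun z : ℝ => (t, (p.1, z))) ((0:ℝ), ((0:ℝ),(1:ℝ))) p.2 :=
    (hasDerivAt_const p.2 t).prodMk ((hasDerivAt_const p.2 p.1).prodMk (hasDerivAt_id p.2))
  have hΦ := ((hf.differentiable (by simp)) (t, p)).hasFDerivAt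
  have h2 : HasDerivAt (fun z => f t (p.1, z)) (fderiv ℝ (fun q : ℝ × (ℝ × ℝ) => f q.1 q.2) (t, p) (0,0,1)) p.2 := by have := hΦ.comp_hasDerivAt p.2 hA; exact this
  rw [show pz (f t) p = deriv (fun z => f t (p.1, z)) p.2 from rfl, h2.deriv]; exact h2

theorem cont_fderiv_apply (hf : SmoothS f) (v : ℝ × (ℝ × ℝ)) :
    Continuous (fun q : ℝ × (ℝ × ℝ) => fderiv ℝ (fun q : ℝ × (ℝ × ℝ) => f q.1 q.2) q v) :=
  ((hf.fderiv_right (m := (⊤ : ℕ∞)) (by simp)).clm_apply contDiff_const).continuous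

theorem cont_pt (hf : SmoothS f) : Continuous (fun q : ℝ × (ℝ × ℝ) => pt f q.1 q.2) := by
  have he : (fun q : ℝ × (ℝ × ℝ) => pt f q.1 q.2)
      = fun q => fderiv ℝ (fun q : ℝ × (ℝ × ℝ) => f q.1 q.2) q (1,0,0) := by
    funext q
    have hA : HasDerivAt (fun s : ℝ => (s, q.2)) ((1:ℝ), ((0:ℝ),(0:ℝ))) q.1 :=
      (hasDerivAt_id q.1).prodMk (hasDerivAt_const q.1 q.2)
    have hΦ := ((hf.differentiable (by simp)) q).hasFDerivAt
    have h2 : HasDerivAt (fun s => f s q.2)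
        (fderiv ℝ (fun q : ℝ × (ℝ × ℝ) => f q.1 q.2) q (1,0,0)) q.1 := by
      have := hΦ.comp_hasDerivAt q.1 hA
      exact this
    exact h2.deriv
  rw [he]; exact cont_fderiv_apply hf _

theorem cont_px (hf : SmoothS f) : Continuous (fun q : ℝ × (ℝ × ℝ) => px (f q.1) q.2) := by
  have he : (fun q : ℝ × (ℝ × ℝ) => px (f q.1) q.2)
      = fun q => fderiv ℝ (fun q : ℝ × (ℝ × ℝ) => f q.1 q.2) q (0,1,0) := by
    funext q
    have hA : HasDerivAt (fun x : ℝ => (q.1, (x, q.2.2))) ((0:ℝ), ((1:ℝ),(0:ℝ))) q.2.1 :=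
      (hasDerivAt_const q.2.1 q.1).prodMk ((hasDerivAt_id q.2.1).prodMk (hasDerivAt_const q.2.1 q.2.2))
    have hΦ := ((hf.differentiable (by simp)) q).hasFDerivAt
    have h2 : HasDerivAt (fun x => f q.1 (x, q.2.2))
        (fderiv ℝ (fun q : ℝ × (ℝ × ℝ) => f q.1 q.2) q (0,1,0)) q.2.1 := by
      have := hΦ.comp_hasDerivAt q.2.1 hA
      exact this
    exact h2.deriv
  rw [he]; exact cont_fderiv_apply hf _

theorem cont_pz (hf : SmoothS f) : Continuous (fun q : ℝ × (ℝ × ℝ) => pz (f q.1) q.2) := by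
  have he : (fun q : ℝ × (ℝ × ℝ) => pz (f q.1) q.2)
      = fun q => fderiv ℝ (fun q : ℝ × (ℝ × ℝ) => f q.1 q.2) q (0,0,1) := by
    funext q
    have hA : HasDerivAt (fun z : ℝ => (q.1, (q.2.1, z))) ((0:ℝ), ((0:ℝ),(1:ℝ))) q.2.2 :=
      (hasDerivAt_const q.2.2 q.1).prodMk ((hasDerivAt_const q.2.2 q.2.1).prodMk (hasDerivAt_id q.2.2))
    have hΦ := ((hf.differentiable (by simp)) q).hasFDerivAt
    have h2 : HasDerivAt (fun z => f q.1 (q.2.1, z))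
        (fderiv ℝ (fun q : ℝ × (ℝ × ℝ) => f q.1 q.2) q (0,0,1)) q.2.2 := by
      have := hΦ.comp_hasDerivAt q.2.2 hA
      exact this
    exact h2.deriv
  rw [he]; exact cont_fderiv_apply hf _

open MeasureTheory intervalIntegral in
theorem param_hasDerivAt {Φ Φ' : ℝ → ℝ → ℝ} {a b : ℝ}
    (hc : Continuous (fun q : ℝ × ℝ => Φ q.1 q.2))
    (hc' : Continuous (fun q : ℝ × ℝ => Φ' q.1 q.2))
    (hd : ∀ s z, HasDerivAt (fun s' => Φ s' z) (Φ' s z) s) (s₀ : ℝ) :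
    HasDerivAt (fun s => ∫ z in a..b, Φ s z) (∫ z in a..b, Φ' s₀ z) s₀ := by
  obtain ⟨C, hC⟩ := (((isCompact_Icc (a := s₀ - 1) (b := s₀ + 1)).prod
    (isCompact_uIcc (a := a) (b := b)))).exists_bound_of_continuousOn hc'.continuousOn
  have key := intervalIntegral.hasDerivAt_integral_of_dominated_loc_of_deriv_le
    (μ := volume) (F := Φ) (F' := Φ') (x₀ := s₀) (a := a) (b := b)
    (bound := fun _ => C) (s := Metric.ball s₀ 1) (Metric.ball_mem_nhds s₀ one_pos)
    (Filter.Eventually.of_forall fun s =>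
      ((hc.comp (continuous_const.prodMk continuous_id)).aestronglyMeasurable))
    ((hc.comp (continuous_const.prodMk continuous_id)).intervalIntegrable _ _)
    ((hc'.comp (continuous_const.prodMk continuous_id)).aestronglyMeasurable)
    (MeasureTheory.ae_of_all _ fun z hz s hs => by
      refine hC (s, z) ⟨?_, Set.uIoc_subset_uIcc hz⟩
      have := Metric.mem_ball.mp hs
      rw [Real.dist_eq] at this
      constructor <;> [linarith [neg_abs_le (s - s₀)]; linarith [le_abs_self (s - s₀)]])
    intervalIntegrable_const
    (MeasureTheory.ae_of_all _ fun z _ s _ => hd s z)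
  exact key.2


def eng (uS : ℝ → ℝ × ℝ → ℝ × ℝ) (uT θS : ℝ → ℝ × ℝ → ℝ) (c H : ℝ) : ℝ → ℝ × ℝ → ℝ :=
  fun t p => ((uS t p).1 ^ 2 + (uS t p).2 ^ 2 + (uT t p) ^ 2) / 2 - c * (p.2 - H / 2) * θS t p

def flux1 (uS : ℝ → ℝ × ℝ → ℝ × ℝ) (uT θS P : ℝ → ℝ × ℝ → ℝ) (c H : ℝ) : ℝ → ℝ × ℝ → ℝ :=
  fun t p => (uS t p).1 * (eng uS uT θS c H t p + P t p)

def flux2 (uS : ℝ → ℝ × ℝ → ℝ × ℝ) (uT θS P : ℝ → ℝ × ℝ → ℝ) (c H : ℝ) : ℝ → ℝ × ℝ → ℝ :=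
  fun t p => (uS t p).2 * (eng uS uT θS c H t p + P t p)

variable {uS : ℝ → ℝ × ℝ → ℝ × ℝ} {uT θS P : ℝ → ℝ × ℝ → ℝ} {c H : ℝ}

theorem smooth_c1 (huS : SmoothV uS) : SmoothS (c1 uS) :=
  contDiff_fst.comp (huS : ContDiff ℝ (⊤ : ℕ∞) (fun q : ℝ × (ℝ × ℝ) => uS q.1 q.2))

theorem smooth_c2 (huS : SmoothV uS) : SmoothS (c2 uS) :=
  contDiff_snd.comp (huS : ContDiff ℝ (⊤ : ℕ∞) (fun q : ℝ × (ℝ × ℝ) => uS q.1 q.2))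

theorem smooth_eng (huS : SmoothV uS) (huT : SmoothS uT) (hθS : SmoothS θS) :
    SmoothS (eng uS uT θS c H) := by
  have h1 := smooth_c1 huS
  have h2 := smooth_c2 huS
  exact ((((h1.pow 2).add (h2.pow 2)).add
      ((huT : ContDiff ℝ (⊤ : ℕ∞) _).pow 2)).div_const 2).sub
    ((contDiff_const.mul ((contDiff_snd.comp contDiff_snd).sub contDiff_const)).mul hθS)

theorem smooth_flux1 (huS : SmoothV uS) (huT : SmoothS uT) (hθS : SmoothS θS)
    (hP : SmoothS P) : SmoothS (flux1 uS uT θS P c H) :=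
  (smooth_c1 huS).mul ((smooth_eng huS huT hθS).add hP)

theorem smooth_flux2 (huS : SmoothV uS) (huT : SmoothS uT) (hθS : SmoothS θS)
    (hP : SmoothS P) : SmoothS (flux2 uS uT θS P c H) :=
  (smooth_c2 huS).mul ((smooth_eng huS huT hθS).add hP)


theorem key_pointwise
    (huS : SmoothV uS) (huT : SmoothS uT) (hθS : SmoothS θS) (hP : SmoothS P)
    (f s : ℝ)
    (hE1x : ∀ t p, pt (c1 uS) t p + adv uS (c1 uS) t p - f * uT t p = -px (P t) p)
    (hE1z : ∀ t p, pt (c2 uS) t p + adv uS (c2 uS) t p = -pz (P t) p + c * θS t p)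
    (hE2 : ∀ t p, pt uT t p + adv uS uT t p + f * (uS t p).1 = -(c * (p.2 - H / 2) * s))
    (hE3 : ∀ t p, px (c1 uS t) p + pz (c2 uS t) p = 0)
    (hE4 : ∀ t p, pt θS t p + adv uS θS t p + s * uT t p = 0) :
    ∀ t p, pt (eng uS uT θS c H) t p
      = -px (flux1 uS uT θS P c H t) p - pz (flux2 uS uT θS P c H t) p := by
  intro t p
  obtain ⟨x, z⟩ := p
  have hu1 := smooth_c1 huS
  have hu2 := smooth_c2 huS
  have Ht_e := (((((hasDerivAt_pt' hu1 t (x,z)).pow 2).add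
      ((hasDerivAt_pt' hu2 t (x,z)).pow 2)).add
      ((hasDerivAt_pt' huT t (x,z)).pow 2)).div_const 2).sub
      ((hasDerivAt_pt' hθS t (x,z)).const_mul (c * (z - H/2)))
  have Hx_e := (((((hasDerivAt_px' hu1 t (x,z)).pow 2).add
      ((hasDerivAt_px' hu2 t (x,z)).pow 2)).add
      ((hasDerivAt_px' huT t (x,z)).pow 2)).div_const 2).sub
      ((hasDerivAt_px' hθS t (x,z)).const_mul (c * (z - H/2)))
  have Hz_e := (((((hasDerivAt_pz' hu1 t (x,z)).pow 2).add
      ((hasDerivAt_pz' hu2 t (x,z)).pow 2)).add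
      ((hasDerivAt_pz' huT t (x,z)).pow 2)).div_const 2).sub
      ((((hasDerivAt_id z).sub_const (H/2)).const_mul c).mul (hasDerivAt_pz' hθS t (x,z)))
  have Hx_F1 := (hasDerivAt_px' hu1 t (x,z)).mul (Hx_e.add (hasDerivAt_px' hP t (x,z)))
  have Hz_F2 := (hasDerivAt_pz' hu2 t (x,z)).mul (Hz_e.add (hasDerivAt_pz' hP t (x,z)))
  rw [show pt (eng uS uT θS c H) t (x,z) = _ from Ht_e.deriv,
      show px (flux1 uS uT θS P c H t) (x,z) = _ from Hx_F1.deriv,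
      show pz (flux2 uS uT θS P c H t) (x,z) = _ from Hz_F2.deriv]
  have e1 := hE1x t (x,z)
  have e2 := hE1z t (x,z)
  have e3 := hE2 t (x,z)
  have e4 := hE4 t (x,z)
  have e0 := hE3 t (x,z)
  simp only [adv, c1, c2, eng, id_eq, Pi.pow_apply, Pi.add_apply, Pi.sub_apply, Pi.div_apply, Pi.mul_apply] at e1 e2 e3 e4 e0 ⊢
  linear_combination (uS t (x,z)).1 * e1 + (uS t (x,z)).2 * e2 + uT t (x,z) * e3
    - (c * (z - H/2)) * e4
    + (((uS t (x,z)).1^2 + (uS t (x,z)).2^2 + uT t (x,z)^2)/2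
        - c * (z - H/2) * θS t (x,z) + P t (x,z)) * e0

set_option maxHeartbeats 1000000 in
open intervalIntegral MeasureTheory in
/-- Energy conservation for the Euler–Boussinesq Eady model:
under (E1)–(E4) on the channel [0,L]×[0,H], with all fields L-periodic in x
and no normal flow at the top and bottom boundaries, the energy
h(t) = ∫_Ω [ ½(|u_S|² + u_T²) − (g/θ₀)(z − H/2)θ_S ] dx dz is constant in t. -/
theorem eady_energy_conservation
    (uS : ℝ → ℝ × ℝ → ℝ × ℝ) (uT θS P : ℝ → ℝ × ℝ → ℝ)
    (f g θ₀ H s : ℝ) (hf : 0 < f) (hg : 0 < g) (hθ₀ : 0 < θ₀)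
    (huS : SmoothV uS) (huT : SmoothS uT) (hθS : SmoothS θS) (hP : SmoothS P)
    (hE1x : ∀ t p, pt (c1 uS) t p + adv uS (c1 uS) t p - f * uT t p = -px (P t) p)
    (hE1z : ∀ t p, pt (c2 uS) t p + adv uS (c2 uS) t p
        = -pz (P t) p + (g / θ₀) * θS t p)
    (hE2 : ∀ t p, pt uT t p + adv uS uT t p + f * (uS t p).1
        = -((g / θ₀) * (p.2 - H / 2) * s))
    (hE3 : ∀ t p, px (c1 uS t) p + pz (c2 uS t) p = 0)
    (hE4 : ∀ t p, pt θS t p + adv uS θS t p + s * uT t p = 0)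
    (L : ℝ) (hL : 0 < L) (hH : 0 < H)
    (hperS : ∀ t x z, uS t (x + L, z) = uS t (x, z))
    (hperT : ∀ t x z, uT t (x + L, z) = uT t (x, z))
    (hperθ : ∀ t x z, θS t (x + L, z) = θS t (x, z))
    (hperP : ∀ t x z, P t (x + L, z) = P t (x, z))
    (hbot : ∀ t x, (uS t (x, 0)).2 = 0)
    (htop : ∀ t x, (uS t (x, H)).2 = 0) :
    ∀ t₁ t₂ : ℝ,
      (∫ x in (0:ℝ)..L, ∫ z in (0:ℝ)..H,
        (((uS t₁ (x, z)).1 ^ 2 + (uS t₁ (x, z)).2 ^ 2 + (uT t₁ (x, z)) ^ 2) / 2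
          - (g / θ₀) * (z - H / 2) * θS t₁ (x, z)))
      =
      (∫ x in (0:ℝ)..L, ∫ z in (0:ℝ)..H,
        (((uS t₂ (x, z)).1 ^ 2 + (uS t₂ (x, z)).2 ^ 2 + (uT t₂ (x, z)) ^ 2) / 2
          - (g / θ₀) * (z - H / 2) * θS t₂ (x, z))) := by
  have key := key_pointwise (c := g / θ₀) (H := H) huS huT hθS hP f s hE1x hE1z hE2 hE3 hE4
  have hsE : SmoothS (eng uS uT θS (g/θ₀) H) := smooth_eng huS huT hθS
  have hsF1 : SmoothS (flux1 uS uT θS P (g/θ₀) H) := smooth_flux1 huS huT hθS hP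
  have hsF2 : SmoothS (flux2 uS uT θS P (g/θ₀) H) := smooth_flux2 huS huT hθS hP
  have contE : Continuous (fun q : ℝ × (ℝ × ℝ) => eng uS uT θS (g/θ₀) H q.1 q.2) :=
    hsE.continuous
  have contPtE := cont_pt hsE
  have contF1 : Continuous (fun q : ℝ × (ℝ × ℝ) => flux1 uS uT θS P (g/θ₀) H q.1 q.2) :=
    hsF1.continuous
  have contPxF1 := cont_px hsF1
  have contPzF2 := cont_pz hsF2
  -- Step A : derivative in time of the inner integral
  have stepA : ∀ (t₀ x : ℝ),
      HasDerivAt (fun t => ∫ z in (0:ℝ)..H, eng uS uT θS (g/θ₀) H t (x, z))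
        (∫ z in (0:ℝ)..H, pt (eng uS uT θS (g/θ₀) H) t₀ (x, z)) t₀ := by
    intro t₀ x
    exact param_hasDerivAt
      (contE.comp (continuous_fst.prodMk (continuous_const.prodMk continuous_snd)))
      (contPtE.comp (continuous_fst.prodMk (continuous_const.prodMk continuous_snd)))
      (fun t' z => hasDerivAt_pt' hsE t' (x, z)) t₀
  -- Step B : derivative of the double integral
  have stepB : ∀ t₀ : ℝ,
      HasDerivAt (fun t => ∫ x in (0:ℝ)..L, ∫ z in (0:ℝ)..H, eng uS uT θS (g/θ₀) H t (x, z))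
        (∫ x in (0:ℝ)..L, ∫ z in (0:ℝ)..H, pt (eng uS uT θS (g/θ₀) H) t₀ (x, z)) t₀ := by
    intro t₀
    refine param_hasDerivAt ?_ ?_ (fun t' x => stepA t' x) t₀
    · exact intervalIntegral.continuous_parametric_intervalIntegral_of_continuous'
        (f := fun (q : ℝ × ℝ) z => eng uS uT θS (g/θ₀) H q.1 (q.2, z))
        (contE.comp ((continuous_fst.comp continuous_fst).prodMk
          ((continuous_snd.comp continuous_fst).prodMk continuous_snd))) 0 H
    · exact intervalIntegral.continuous_parametric_intervalIntegral_of_continuous'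
        (f := fun (q : ℝ × ℝ) z => pt (eng uS uT θS (g/θ₀) H) q.1 (q.2, z))
        (contPtE.comp ((continuous_fst.comp continuous_fst).prodMk
          ((continuous_snd.comp continuous_fst).prodMk continuous_snd))) 0 H
  -- Step C : the derivative vanishes
  have hzero : ∀ t₀ : ℝ,
      (∫ x in (0:ℝ)..L, ∫ z in (0:ℝ)..H, pt (eng uS uT θS (g/θ₀) H) t₀ (x, z)) = 0 := by
    intro t₀
    have hcF1t : Continuous (fun q : ℝ × ℝ => flux1 uS uT θS P (g/θ₀) H t₀ (q.1, q.2)) :=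
      contF1.comp (continuous_const.prodMk (continuous_fst.prodMk continuous_snd))
    have hcPxF1t : Continuous (fun q : ℝ × ℝ => px (flux1 uS uT θS P (g/θ₀) H t₀) (q.1, q.2)) :=
      contPxF1.comp (continuous_const.prodMk (continuous_fst.prodMk continuous_snd))
    -- FTC in z for the vertical flux
    have hFTCz : ∀ x : ℝ,
        (∫ z in (0:ℝ)..H, pz (flux2 uS uT θS P (g/θ₀) H t₀) (x, z)) = 0 := by
      intro x
      have h1 : ∀ z ∈ Set.uIcc (0:ℝ) H,
          HasDerivAt (fun z => flux2 uS uT θS P (g/θ₀) H t₀ (x, z))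
            (pz (flux2 uS uT θS P (g/θ₀) H t₀) (x, z)) z :=
        fun z _ => hasDerivAt_pz' hsF2 t₀ (x, z)
      have h2 : IntervalIntegrable (fun z => pz (flux2 uS uT θS P (g/θ₀) H t₀) (x, z))
          volume 0 H :=
        (contPzF2.comp (continuous_const.prodMk
          (continuous_const.prodMk continuous_id))).intervalIntegrable _ _
      rw [intervalIntegral.integral_eq_sub_of_hasDerivAt h1 h2]
      simp [flux2, htop t₀ x, hbot t₀ x]
    -- inner integral reduces to the horizontal flux
    have hInner : ∀ x : ℝ,
        (∫ z in (0:ℝ)..H, pt (eng uS uT θS (g/θ₀) H) t₀ (x, z))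
          = -(∫ z in (0:ℝ)..H, px (flux1 uS uT θS P (g/θ₀) H t₀) (x, z)) := by
      intro x
      rw [intervalIntegral.integral_congr
        (g := fun z => -px (flux1 uS uT θS P (g/θ₀) H t₀) (x, z)
          - pz (flux2 uS uT θS P (g/θ₀) H t₀) (x, z))
        (fun z _ => key t₀ (x, z))]
      have i1 : IntervalIntegrable
          (fun z => -px (flux1 uS uT θS P (g/θ₀) H t₀) (x, z)) volume 0 H :=
        ((hcPxF1t.comp (continuous_const.prodMk continuous_id)).neg).intervalIntegrable _ _
      have i2 : IntervalIntegrable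
          (fun z => pz (flux2 uS uT θS P (g/θ₀) H t₀) (x, z)) volume 0 H :=
        (contPzF2.comp (continuous_const.prodMk
          (continuous_const.prodMk continuous_id))).intervalIntegrable _ _
      rw [intervalIntegral.integral_sub i1 i2, hFTCz x,
        intervalIntegral.integral_neg, sub_zero]
    -- antiderivative in x of the horizontal flux integral
    have hφ : ∀ x₀ : ℝ,
        HasDerivAt (fun x => ∫ z in (0:ℝ)..H, flux1 uS uT θS P (g/θ₀) H t₀ (x, z))
          (∫ z in (0:ℝ)..H, px (flux1 uS uT θS P (g/θ₀) H t₀) (x₀, z)) x₀ := by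
      intro x₀
      exact param_hasDerivAt
        (Φ := fun x z => flux1 uS uT θS P (g/θ₀) H t₀ (x, z))
        (Φ' := fun x z => px (flux1 uS uT θS P (g/θ₀) H t₀) (x, z))
        hcF1t hcPxF1t
        (fun x z => (hasDerivAt_px' hsF1 t₀ (x, z) :
          HasDerivAt (fun x' => flux1 uS uT θS P (g/θ₀) H t₀ (x', z)) _ _)) x₀
    have hper1 : ∀ z : ℝ, flux1 uS uT θS P (g/θ₀) H t₀ (L, z)
        = flux1 uS uT θS P (g/θ₀) H t₀ (0, z) := by
      intro z
      have h0 := hperS t₀ 0 z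
      have h1 := hperT t₀ 0 z
      have h2 := hperθ t₀ 0 z
      have h3 := hperP t₀ 0 z
      rw [zero_add] at h0 h1 h2 h3
      simp [flux1, eng, h0, h1, h2, h3]
    have hint : IntervalIntegrable
        (fun x => ∫ z in (0:ℝ)..H, px (flux1 uS uT θS P (g/θ₀) H t₀) (x, z)) volume 0 L := by
      refine Continuous.intervalIntegrable ?_ _ _
      exact intervalIntegral.continuous_parametric_intervalIntegral_of_continuous'
        (f := fun (x : ℝ) z => px (flux1 uS uT θS P (g/θ₀) H t₀) (x, z))
        (contPxF1.comp (continuous_const.prodMk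
          (continuous_fst.prodMk continuous_snd))) 0 H
    rw [intervalIntegral.integral_congr (g := fun x =>
        -(∫ z in (0:ℝ)..H, px (flux1 uS uT θS P (g/θ₀) H t₀) (x, z)))
        (fun x _ => hInner x), intervalIntegral.integral_neg,
      intervalIntegral.integral_eq_sub_of_hasDerivAt (fun x _ => hφ x) hint]
    rw [intervalIntegral.integral_congr (g := fun z => flux1 uS uT θS P (g/θ₀) H t₀ (0, z))
      (fun z _ => hper1 z)]
    ring
  have hdiff : Differentiable ℝ
      (fun t => ∫ x in (0:ℝ)..L, ∫ z in (0:ℝ)..H, eng uS uT θS (g/θ₀) H t (x, z)) :=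
    fun t₀ => (stepB t₀).differentiableAt
  have hderiv0 : ∀ t₀ : ℝ, deriv
      (fun t => ∫ x in (0:ℝ)..L, ∫ z in (0:ℝ)..H, eng uS uT θS (g/θ₀) H t (x, z)) t₀ = 0 :=
    fun t₀ => by rw [(stepB t₀).deriv, hzero t₀]
  intro t₁ t₂
  exact is_const_of_deriv_eq_zero hdiff hderiv0 t₁ t₂
end
end
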